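/- arXiv:1401.3309 — 4 statements merged into one kernel-verified Lean document; each statement's English description precedes it below -/
import Mathlib

section
/- (Strong RR1) Let D be a divisor on a finite connected simple graph G with deg(D) = k ≤ g − 1. Then there exists a divisor D' with D ≤ D' pointwise, deg(D') = g − 1, and r(D') = r(D). -/
/-- A partial orientation of a simple graph `G`: each edge of some subset of the
edges of `G` is given a direction; `dir u v = true` means the edge `{u,v}` is
oriented from `u` towards `v`. -/
structure PartialOrientation {V : Type*} (G : SimpleGraph V) where
  dir : V → V → Bool
  adj_of_dir : ∀ u v, dir u v = true → G.Adj u v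
  not_both : ∀ u v, dir u v = true → dir v u = false

namespace PartialOrientation

variable {V : Type*} {G : SimpleGraph V}

/-- The indegree of a vertex in a partial orientation. -/
def indeg [Fintype V] (O : PartialOrientation G) (v : V) : ℕ :=
  (Finset.univ.filter (fun u => O.dir u v = true)).card

/-- The divisor associated to a partial orientation: `D_O(v) = indeg(v) - 1`. -/
def div [Fintype V] (O : PartialOrientation G) (v : V) : ℤ :=
  (O.indeg v : ℤ) - 1

/-- A partial orientation is acyclic if it has no directed cycle (equivalently,
no vertex reaches itself by a nonempty directed walk). -/
def Acyclic (O : PartialOrientation G) : Prop :=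
  ∀ v, ¬ Relation.TransGen (fun a b => O.dir a b = true) v v

/-- A partial orientation is sourceless if every vertex has an incoming oriented edge. -/
def Sourceless (O : PartialOrientation G) : Prop :=
  ∀ v, ∃ u, O.dir u v = true

/-- A partial orientation is `q`-connected if every vertex is reachable from `q`
by a (possibly empty) directed path. -/
def QConnected (O : PartialOrientation G) (q : V) : Prop :=
  ∀ v, Relation.ReflTransGen (fun a b => O.dir a b = true) q v

/-- A partial orientation is full if every edge of `G` is oriented. -/
def IsFull (O : PartialOrientation G) : Prop :=
  ∀ u v, G.Adj u v → (O.dir u v = true ∨ O.dir v u = true)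

/-- An edge pivot at a vertex `v`: an edge oriented towards `v` becomes unoriented
and a previously unoriented edge incident to `v` becomes oriented towards `v`. -/
def EdgePivot (O O' : PartialOrientation G) : Prop :=
  ∃ v u w, O.dir u v = true ∧ G.Adj w v ∧ O.dir w v = false ∧ O.dir v w = false ∧
    ∀ a b, (O'.dir a b = true ↔
      ((a = w ∧ b = v) ∨ (O.dir a b = true ∧ ¬(a = u ∧ b = v))))

/-- A cycle reversal: all edges of a consistently oriented (directed) cycle are reversed. -/
def CycleReversal (O O' : PartialOrientation G) : Prop :=
  ∃ (n : ℕ) (σ : Fin (n + 1) → V), Function.Injective σ ∧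
    (∀ i : Fin (n + 1), O.dir (σ i) (σ (i + 1)) = true) ∧
    ∀ a b, (O'.dir a b = true ↔
      ((∃ i : Fin (n + 1), a = σ (i + 1) ∧ b = σ i) ∨
        (O.dir a b = true ∧ ¬ ∃ i : Fin (n + 1), a = σ i ∧ b = σ (i + 1))))

/-- A directed path reversal: all edges of a directed path are reversed. -/
def PathReversal (O O' : PartialOrientation G) : Prop :=
  ∃ (n : ℕ) (σ : Fin (n + 1) → V), Function.Injective σ ∧
    (∀ i : Fin n, O.dir (σ i.castSucc) (σ i.succ) = true) ∧
    ∀ a b, (O'.dir a b = true ↔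
      ((∃ i : Fin n, a = σ i.succ ∧ b = σ i.castSucc) ∨
        (O.dir a b = true ∧ ¬ ∃ i : Fin n, a = σ i.castSucc ∧ b = σ i.succ)))

/-- A cocycle (cut) reversal: all edges of a cut `(S, V∖S)` in which every edge of
the cut is oriented, all towards `S`, are reversed. -/
def CocycleReversal (O O' : PartialOrientation G) : Prop :=
  ∃ S : Set V,
    (∀ u v, G.Adj u v → u ∉ S → v ∈ S → O.dir u v = true) ∧
    ∀ a b, (O'.dir a b = true ↔
      ((a ∈ S ∧ b ∉ S ∧ O.dir b a = true) ∨
        ((a ∈ S ↔ b ∈ S) ∧ O.dir a b = true)))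

/-- Equivalence in the generalized cycle reversal system: a finite sequence of
edge pivots and cycle reversals. -/
def GenCycleEquiv (O O' : PartialOrientation G) : Prop :=
  Relation.ReflTransGen (fun A B => EdgePivot A B ∨ CycleReversal A B) O O'

/-- Equivalence in the generalized cocycle reversal system: a finite sequence of
edge pivots and cocycle reversals. -/
def GenCocycleEquiv (O O' : PartialOrientation G) : Prop :=
  Relation.ReflTransGen (fun A B => EdgePivot A B ∨ CocycleReversal A B) O O'

/-- Equivalence in the generalized cycle-cocycle reversal system: a finite sequence
of edge pivots, cycle reversals and cocycle reversals. -/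
def GenCycleCocycleEquiv (O O' : PartialOrientation G) : Prop :=
  Relation.ReflTransGen
    (fun A B => EdgePivot A B ∨ CycleReversal A B ∨ CocycleReversal A B) O O'

/-- Equivalence in the (plain) cocycle reversal system: a finite sequence of
cocycle reversals. -/
def CocycleEquiv (O O' : PartialOrientation G) : Prop :=
  Relation.ReflTransGen (fun A B => CocycleReversal A B) O O'

end PartialOrientation

/-- The degree of a divisor: the total number of chips. -/
def degDiv {V : Type*} [Fintype V] (D : V → ℤ) : ℤ := ∑ v, D v

/-- `deg⁺` of a divisor: the sum of its positive values. -/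
def degPlus {V : Type*} [Fintype V] (D : V → ℤ) : ℤ := ∑ v, max (D v) 0

/-- A divisor is effective if all of its values are nonnegative. -/
def EffectiveDiv {V : Type*} (D : V → ℤ) : Prop := ∀ v, 0 ≤ D v

/-- Linear equivalence of divisors: `D - D'` lies in the ℤ-span of the columns of
the Laplacian, i.e. there is an integral firing vector `f` with
`D - D' = Δ f`. -/
def LinEquiv {V : Type*} [Fintype V] (G : SimpleGraph V) [DecidableRel G.Adj]
    (D D' : V → ℤ) : Prop :=
  ∃ f : V → ℤ, ∀ v, D v - D' v = ∑ u ∈ Finset.univ.filter (fun u => G.Adj v u), (f v - f u)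

/-- The Baker–Norine rank of a divisor: one less than the minimal degree of an
effective divisor `E` such that `D - E` is not linearly equivalent to any
effective divisor.  In particular `divisorRank G D = -1` iff `D` is not linearly
equivalent to an effective divisor. -/
noncomputable def divisorRank {V : Type*} [Fintype V] (G : SimpleGraph V)
    [DecidableRel G.Adj] (D : V → ℤ) : ℤ :=
  ((sInf { n : ℕ | ∃ E : V → ℤ, EffectiveDiv E ∧ degDiv E = (n : ℤ) ∧
      ¬ ∃ E' : V → ℤ, EffectiveDiv E' ∧ LinEquiv G (fun v => D v - E v) E' } : ℕ) : ℤ) - 1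

/-- The genus (cyclomatic number) of a graph: `g = |E| - |V| + 1`. -/
def graphGenus {V : Type*} [Fintype V] [DecidableEq V] (G : SimpleGraph V)
    [DecidableRel G.Adj] : ℤ :=
  (G.edgeFinset.card : ℤ) - (Fintype.card V : ℤ) + 1

/-- The number of edges of the induced subgraph `G[T]`. -/
def inducedEdgeCount {V : Type*} [Fintype V] [DecidableEq V] (G : SimpleGraph V)
    [DecidableRel G.Adj] (T : Finset V) : ℕ :=
  (G.edgeFinset.filter (fun e => e ∈ T.sym2)).card

/-- `χ̄(S, D) = |E| - |E(G[V∖S])| - |S| - deg(D|_S)`. -/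
def chiBar {V : Type*} [Fintype V] [DecidableEq V] (G : SimpleGraph V)
    [DecidableRel G.Adj] (D : V → ℤ) (S : Finset V) : ℤ :=
  (G.edgeFinset.card : ℤ) - (inducedEdgeCount G Sᶜ : ℤ) - (S.card : ℤ) - ∑ v ∈ S, D v

/-- `outdeg_A(v)`: the number of edges joining `v` to vertices outside `A`. -/
def outdegOf {V : Type*} [Fintype V] [DecidableEq V] (G : SimpleGraph V) [DecidableRel G.Adj]
    (A : Finset V) (v : V) : ℕ :=
  (Finset.univ.filter (fun u => G.Adj v u ∧ u ∉ A)).card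

/-- A divisor `D` is `q`-reduced if `D(v) ≥ 0` for `v ≠ q` and every nonempty
set `A ⊆ V ∖ {q}` contains a vertex sent into debt by firing `A`. -/
def QReduced {V : Type*} [Fintype V] [DecidableEq V] (G : SimpleGraph V) [DecidableRel G.Adj]
    (q : V) (D : V → ℤ) : Prop :=
  (∀ v, v ≠ q → 0 ≤ D v) ∧
    ∀ A : Finset V, A.Nonempty → q ∉ A → ∃ v ∈ A, D v - (outdegOf G A v : ℤ) < 0

/-- The canonical divisor `K(v) = deg(v) - 2`. -/
def canonicalDiv {V : Type*} [Fintype V] (G : SimpleGraph V) [DecidableRel G.Adj]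
    (v : V) : ℤ :=
  (G.degree v : ℤ) - 2




namespace RR1Aux

set_option linter.unusedSectionVars false

open Finset

variable {V : Type*} [Fintype V] [DecidableEq V] (G : SimpleGraph V) [DecidableRel G.Adj]

/-- integer Laplacian applied to f -/
def lap (f : V → ℤ) (v : V) : ℤ :=
  ∑ u ∈ Finset.univ.filter (fun u => G.Adj v u), (f v - f u)

/-- rational Laplacian -/
def lapQ (f : V → ℚ) (v : V) : ℚ :=
  ∑ u ∈ Finset.univ.filter (fun u => G.Adj v u), (f v - f u)

lemma lap_cast (f : V → ℤ) (v : V) :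
    ((lap G f v : ℤ) : ℚ) = lapQ G (fun u => (f u : ℚ)) v := by
  simp [lap, lapQ]

lemma swap_sum {M : Type*} [AddCommMonoid M] (F : V → V → M) :
    ∑ v, ∑ u ∈ Finset.univ.filter (fun u => G.Adj v u), F v u
      = ∑ v, ∑ u ∈ Finset.univ.filter (fun u => G.Adj v u), F u v := by
  rw [Finset.sum_comm' (s := Finset.univ) (t := fun v => Finset.univ.filter (fun u => G.Adj v u))
    (t' := Finset.univ) (s' := fun u => Finset.univ.filter (fun v => G.Adj u v))]
  intro x y
  simp [G.adj_comm, and_comm]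

lemma sum_lap (f : V → ℤ) : ∑ v, lap G f v = 0 := by
  have h := swap_sum G (fun v u => f v)
  unfold lap
  rw [Finset.sum_congr rfl (fun v _ => Finset.sum_sub_distrib _ _)]
  rw [Finset.sum_sub_distrib, h]
  ring

lemma sum_lapQ (f : V → ℚ) : ∑ v, lapQ G f v = 0 := by
  have h := swap_sum G (fun v u => f v)
  unfold lapQ
  rw [Finset.sum_congr rfl (fun v _ => Finset.sum_sub_distrib _ _)]
  rw [Finset.sum_sub_distrib, h]
  ring

lemma lap_symm (f g : V → ℤ) : ∑ v, lap G f v * g v = ∑ v, f v * lap G g v := by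
  unfold lap
  have e1 : ∀ v, (∑ u ∈ Finset.univ.filter (fun u => G.Adj v u), (f v - f u)) * g v
      = ∑ u ∈ Finset.univ.filter (fun u => G.Adj v u), (f v * g v - f u * g v) := by
    intro v; rw [Finset.sum_mul]; exact Finset.sum_congr rfl (fun u _ => by ring)
  have e2 : ∀ v, f v * (∑ u ∈ Finset.univ.filter (fun u => G.Adj v u), (g v - g u))
      = ∑ u ∈ Finset.univ.filter (fun u => G.Adj v u), (f v * g v - f v * g u) := by
    intro v; rw [Finset.mul_sum]; exact Finset.sum_congr rfl (fun u _ => by ring)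
  rw [Finset.sum_congr rfl fun v _ => e1 v, Finset.sum_congr rfl fun v _ => e2 v]
  rw [Finset.sum_congr rfl fun v _ => Finset.sum_sub_distrib _ _,
      Finset.sum_congr rfl fun v _ => Finset.sum_sub_distrib _ _,
      Finset.sum_sub_distrib, Finset.sum_sub_distrib,
      swap_sum G (fun v u => f v * g u)]

/-- lap is unchanged by adding a constant -/
lemma lap_add_const (f : V → ℤ) (c : ℤ) (v : V) : lap G (fun u => f u + c) v = lap G f v := by
  unfold lap; exact Finset.sum_congr rfl (fun u _ => by ring)

lemma lap_add (f g : V → ℤ) (v : V) : lap G (fun u => f u + g u) v = lap G f v + lap G g v := by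
  unfold lap; rw [← Finset.sum_add_distrib]; exact Finset.sum_congr rfl (fun u _ => by ring)

lemma lap_neg (f : V → ℤ) (v : V) : lap G (fun u => - f u) v = - lap G f v := by
  unfold lap; rw [← Finset.sum_neg_distrib]; exact Finset.sum_congr rfl (fun u _ => by ring)

lemma lap_smul (t : ℤ) (f : V → ℤ) (v : V) : lap G (fun u => t * f u) v = t * lap G f v := by
  unfold lap; rw [Finset.mul_sum]; exact Finset.sum_congr rfl (fun u _ => by ring)

/-- the Laplacian as a linear map over ℚ -/
def LQ : (V → ℚ) →ₗ[ℚ] (V → ℚ) where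
  toFun f := lapQ G f
  map_add' f g := by
    funext v; unfold lapQ; simp only [Pi.add_apply]
    rw [← Finset.sum_add_distrib]; exact Finset.sum_congr rfl (fun u _ => by ring)
  map_smul' t f := by
    funext v; unfold lapQ; simp only [Pi.smul_apply, smul_eq_mul, RingHom.id_apply]
    rw [Finset.mul_sum]; exact Finset.sum_congr rfl (fun u _ => by ring)

/-- sum functional -/
def sumL : (V → ℚ) →ₗ[ℚ] ℚ where
  toFun f := ∑ v, f v
  map_add' f g := by simp [Finset.sum_add_distrib]
  map_smul' t f := by simp [Finset.mul_sum]

lemma lapQ_quadratic (f : V → ℚ) :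
    2 * ∑ v, f v * lapQ G f v
      = ∑ v, ∑ u ∈ Finset.univ.filter (fun u => G.Adj v u), (f v - f u)^2 := by
  have hL : ∑ v, f v * lapQ G f v
      = (∑ v, ∑ u ∈ Finset.univ.filter (fun u => G.Adj v u), (f v)^2)
        - ∑ v, ∑ u ∈ Finset.univ.filter (fun u => G.Adj v u), f v * f u := by
    rw [← Finset.sum_sub_distrib]
    refine Finset.sum_congr rfl (fun v _ => ?_)
    rw [← Finset.sum_sub_distrib]
    unfold lapQ
    rw [Finset.mul_sum]
    exact Finset.sum_congr rfl (fun u _ => by ring)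
  have hR : ∑ v, ∑ u ∈ Finset.univ.filter (fun u => G.Adj v u), (f v - f u)^2
      = (∑ v, ∑ u ∈ Finset.univ.filter (fun u => G.Adj v u), (f v)^2)
        - 2 * (∑ v, ∑ u ∈ Finset.univ.filter (fun u => G.Adj v u), f v * f u)
        + ∑ v, ∑ u ∈ Finset.univ.filter (fun u => G.Adj v u), (f u)^2 := by
    rw [Finset.mul_sum, ← Finset.sum_sub_distrib, ← Finset.sum_add_distrib]
    refine Finset.sum_congr rfl (fun v _ => ?_)
    rw [Finset.mul_sum, ← Finset.sum_sub_distrib, ← Finset.sum_add_distrib]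
    exact Finset.sum_congr rfl (fun u _ => by ring)
  have hsw := swap_sum G (fun v u => (f v)^2)
  rw [hL, hR, ← hsw]
  ring

lemma ker_LQ_const (hG : G.Connected) (f : V → ℚ) (hf : lapQ G f = 0) :
    ∀ v u, f v = f u := by
  have h2 : ∑ v, ∑ u ∈ Finset.univ.filter (fun u => G.Adj v u), (f v - f u)^2 = 0 := by
    rw [← lapQ_quadratic, hf]; simp
  have hterm : ∀ v u, G.Adj v u → f v = f u := by
    intro v u hadj
    have h3 : ∀ v ∈ (Finset.univ : Finset V),
        (0:ℚ) ≤ ∑ u ∈ Finset.univ.filter (fun u => G.Adj v u), (f v - f u)^2 := by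
      intro v _; exact Finset.sum_nonneg (fun u _ => sq_nonneg _)
    have h4 := (Finset.sum_eq_zero_iff_of_nonneg h3).1 h2 v (Finset.mem_univ v)
    have h5 : ∀ u ∈ Finset.univ.filter (fun u => G.Adj v u), (0:ℚ) ≤ (f v - f u)^2 :=
      fun u _ => sq_nonneg _
    have h6 := (Finset.sum_eq_zero_iff_of_nonneg h5).1 h4 u (by simp [hadj])
    have := sq_eq_zero_iff.mp h6
    linarith
  intro v u
  have hr : G.Reachable v u := hG.preconnected v u
  obtain ⟨w⟩ := hr
  induction w with
  | nil => rfl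
  | cons h p ih => rw [hterm _ _ h]; exact ih

lemma range_LQ (hG : G.Connected) (b : V → ℚ) (hb : ∑ v, b v = 0) :
    ∃ f : V → ℚ, lapQ G f = b := by
  have : Nonempty V := hG.nonempty
  obtain ⟨q⟩ := this
  -- kernel of LQ is the span of the constant function 1
  have hker : LinearMap.ker (LQ G) = Submodule.span ℚ {(fun _ => (1:ℚ) : V → ℚ)} := by
    apply le_antisymm
    · intro f hf
      have hconst := ker_LQ_const G hG f (LinearMap.mem_ker.mp hf)
      have : f = f q • (fun _ => (1:ℚ)) := by
        funext v; simp [hconst v q]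
      rw [this]
      exact Submodule.smul_mem _ _ (Submodule.mem_span_singleton_self _)
    · rw [Submodule.span_singleton_le_iff_mem, LinearMap.mem_ker]
      funext v; unfold LQ lapQ; simp
  have hker_rank : Module.finrank ℚ (LinearMap.ker (LQ G)) = 1 := by
    rw [hker]
    apply finrank_span_singleton
    intro h
    have := congrFun h q
    simp at this
  have hrange_le : LinearMap.range (LQ G) ≤ LinearMap.ker (sumL (V := V)) := by
    rintro _ ⟨f, rfl⟩
    simp only [LinearMap.mem_ker]
    show ∑ v, lapQ G f v = 0
    exact sum_lapQ G f
  have hcard : 0 < Fintype.card V := Fintype.card_pos_iff.mpr ⟨q⟩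
  have hsum_surj : LinearMap.range (sumL (V := V)) = ⊤ := by
    rw [LinearMap.range_eq_top]
    intro c
    refine ⟨fun _ => c / Fintype.card V, ?_⟩
    show ∑ _v : V, c / (Fintype.card V : ℚ) = c
    rw [Finset.sum_const, Finset.card_univ, nsmul_eq_mul]
    field_simp
  have h1 : Module.finrank ℚ (LinearMap.range (LQ G))
      = Module.finrank ℚ (LinearMap.ker (sumL (V := V))) := by
    have e1 := LinearMap.finrank_range_add_finrank_ker (LQ G)
    have e2 := LinearMap.finrank_range_add_finrank_ker (sumL (V := V))
    have e3 : Module.finrank ℚ (LinearMap.range (sumL (V := V))) = 1 := by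
      rw [hsum_surj]; simp [Module.finrank_self]
    omega
  have heq : LinearMap.range (LQ G) = LinearMap.ker (sumL (V := V)) :=
    Submodule.eq_of_le_of_finrank_le hrange_le (le_of_eq h1.symm)
  have hbmem : b ∈ LinearMap.ker (sumL (V := V)) := by
    simp only [LinearMap.mem_ker]; exact hb
  rw [← heq] at hbmem
  obtain ⟨f, hf⟩ := hbmem
  exact ⟨f, hf⟩

/-- key potential: `w ≥ 0`, `w q = 0`, and `lap w ≥ 1` off `q`. -/
lemma exists_potential (hG : G.Connected) (q : V) :
    ∃ w : V → ℤ, w q = 0 ∧ (∀ v, 0 ≤ w v) ∧ (∀ v, v ≠ q → 1 ≤ lap G w v) := by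
  classical
  set n : ℚ := (Fintype.card V : ℚ)
  set b : V → ℚ := fun v => if v = q then 1 - n else 1 with hbdef
  have hb : ∑ v, b v = 0 := by
    have : ∀ v, b v = 1 + (if v = q then -n else 0) := by
      intro v; rw [hbdef]; by_cases h : v = q <;> simp [h] <;> ring
    rw [Finset.sum_congr rfl (fun v _ => this v), Finset.sum_add_distrib,
      Finset.sum_ite_eq' Finset.univ q (fun _ => -n)]
    simp [n]
  obtain ⟨g, hg⟩ := range_LQ G hG b hb
  -- clear denominators
  set N : ℕ := ∏ v, (g v).den with hNdef
  have hNpos : 0 < N := Finset.prod_pos (fun v _ => (g v).pos)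
  have hint : ∀ v, ∃ z : ℤ, (z : ℚ) = (N : ℚ) * g v := by
    intro v
    obtain ⟨c, hc⟩ := Finset.dvd_prod_of_mem (fun v => (g v).den) (Finset.mem_univ v)
    refine ⟨c * (g v).num, ?_⟩
    have hden : ((g v).den : ℚ) * g v = (g v).num := by
      have h0 : ((g v).den : ℚ) ≠ 0 := by exact_mod_cast (g v).den_nz
      have h2 : ((g v).den : ℚ) * (((g v).num:ℚ) / ((g v).den:ℚ)) = ((g v).num : ℚ) := by
        field_simp
      calc ((g v).den : ℚ) * g v
          = ((g v).den : ℚ) * (((g v).num:ℚ)/((g v).den:ℚ)) := by rw [Rat.num_div_den]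
        _ = ((g v).num : ℚ) := h2
    have hN : (N : ℚ) = ((g v).den : ℚ) * (c : ℚ) := by
      rw [hNdef]; exact_mod_cast congrArg (Nat.cast : ℕ → ℚ) hc
    rw [hN]
    push_cast
    rw [mul_comm ((g v).den : ℚ) (c:ℚ), mul_assoc, hden]
  choose w1 hw1 using hint
  -- lap w1 = N * b
  have hlapw1 : ∀ v, (lap G w1 v : ℚ) = (N:ℚ) * b v := by
    intro v
    rw [lap_cast]
    have : (fun u => (w1 u : ℚ)) = fun u => (N:ℚ) * g u := by funext u; exact hw1 u
    rw [this]
    have : lapQ G (fun u => (N:ℚ) * g u) v = (N:ℚ) * lapQ G g v := by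
      unfold lapQ; rw [Finset.mul_sum]; exact Finset.sum_congr rfl (fun u _ => by ring)
    rw [this, hg]
  have hlap_off : ∀ v, v ≠ q → 1 ≤ lap G w1 v := by
    intro v hv
    have h := hlapw1 v
    rw [hbdef] at h
    simp only [if_neg hv, mul_one] at h
    have : lap G w1 v = (N : ℤ) := by exact_mod_cast h
    rw [this]; exact_mod_cast hNpos
  -- shift so that value at q is 0
  set w : V → ℤ := fun v => w1 v - w1 q with hwdef
  have hlapw : ∀ v, lap G w v = lap G w1 v := by
    intro v
    have := lap_add_const G w1 (- w1 q) v
    rw [hwdef]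
    simpa [sub_eq_add_neg] using this
  have hwq : w q = 0 := by simp [hwdef]
  -- max principle: no v ≠ q can be a global minimum
  have hmin : ∀ v, v ≠ q → (∀ u, w v ≤ w u) → False := by
    intro v hv hle
    have h1 : 1 ≤ lap G w v := by rw [hlapw]; exact hlap_off v hv
    have h2 : lap G w v ≤ 0 := by
      unfold lap
      apply Finset.sum_nonpos
      intro u _
      have := hle u
      omega
    omega
  have hwnn : ∀ v, 0 ≤ w v := by
    obtain ⟨v₀, _, hv₀⟩ := Finset.exists_min_image Finset.univ w ⟨q, Finset.mem_univ q⟩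
    have hv₀q : v₀ = q := by
      by_contra hne
      exact hmin v₀ hne (fun u => hv₀ u (Finset.mem_univ u))
    intro v
    have := hv₀ v (Finset.mem_univ v)
    rw [hv₀q, hwq] at this
    exact this
  exact ⟨w, hwq, hwnn, fun v hv => by rw [hlapw]; exact hlap_off v hv⟩

lemma linEquiv_iff (D D' : V → ℤ) :
    LinEquiv G D D' ↔ ∃ f : V → ℤ, ∀ v, D v - D' v = lap G f v := Iff.rfl

lemma linEquiv_refl (D : V → ℤ) : LinEquiv G D D :=
  ⟨fun _ => 0, fun v => by simp [lap]⟩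

lemma linEquiv_symm {D D' : V → ℤ} (h : LinEquiv G D D') : LinEquiv G D' D := by
  obtain ⟨f, hf⟩ := h
  refine ⟨fun v => -f v, fun v => ?_⟩
  have h2 : ∑ u ∈ Finset.univ.filter (fun u => G.Adj v u), (-f v - -f u)
      = - ∑ u ∈ Finset.univ.filter (fun u => G.Adj v u), (f v - f u) := by
    rw [← Finset.sum_neg_distrib]; exact Finset.sum_congr rfl fun u _ => by ring
  simp only
  rw [h2, ← hf v]; ring

lemma linEquiv_trans {D D' D'' : V → ℤ} (h : LinEquiv G D D') (h' : LinEquiv G D' D'') :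
    LinEquiv G D D'' := by
  obtain ⟨f, hf⟩ := h; obtain ⟨g, hg⟩ := h'
  refine ⟨fun v => f v + g v, fun v => ?_⟩
  have h2 : ∑ u ∈ Finset.univ.filter (fun u => G.Adj v u), ((f v + g v) - (f u + g u))
      = (∑ u ∈ Finset.univ.filter (fun u => G.Adj v u), (f v - f u))
        + ∑ u ∈ Finset.univ.filter (fun u => G.Adj v u), (g v - g u) := by
    rw [← Finset.sum_add_distrib]; exact Finset.sum_congr rfl fun u _ => by ring
  simp only
  rw [h2, ← hf v, ← hg v]; ring

lemma linEquiv_deg {D D' : V → ℤ} (h : LinEquiv G D D') : degDiv D = degDiv D' := by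
  obtain ⟨f, hf⟩ := h
  have : ∑ v, (D v - D' v) = ∑ v, lap G f v := Finset.sum_congr rfl (fun v _ => hf v)
  rw [sum_lap] at this
  rw [Finset.sum_sub_distrib] at this
  unfold degDiv
  omega

/-- adding the same divisor preserves linear equivalence -/
lemma linEquiv_add {D D' : V → ℤ} (A : V → ℤ) (h : LinEquiv G D D') :
    LinEquiv G (fun v => D v + A v) (fun v => D' v + A v) := by
  obtain ⟨f, hf⟩ := h
  exact ⟨f, fun v => by have := hf v; simpa using this⟩

def Winnable (D : V → ℤ) : Prop := ∃ E : V → ℤ, EffectiveDiv E ∧ LinEquiv G D E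

lemma winnable_of_linEquiv {D D' : V → ℤ} (h : LinEquiv G D D') (hw : Winnable G D') :
    Winnable G D := by
  obtain ⟨E, hE, hDE⟩ := hw
  exact ⟨E, hE, linEquiv_trans G h hDE⟩

lemma winnable_add_effective {D A : V → ℤ} (hA : ∀ v, 0 ≤ A v) (hw : Winnable G D) :
    Winnable G (fun v => D v + A v) := by
  obtain ⟨E, hE, ⟨f, hf⟩⟩ := hw
  exact ⟨fun v => E v + A v, fun v => add_nonneg (hE v) (hA v),
    ⟨f, fun v => by have := hf v; simp only; omega⟩⟩

/-- subtracting an effective divisor preserves unwinnability...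
    i.e. if `D - A` winnable then adding effective A: actually:
    if `D + A` is... we need: W unwinnable → W - E unwinnable. contrapositive:
    W - E winnable → W winnable. -/
lemma winnable_of_sub_effective {D A : V → ℤ} (hA : ∀ v, 0 ≤ A v)
    (hw : Winnable G (fun v => D v - A v)) : Winnable G D := by
  have := winnable_add_effective G hA hw
  obtain ⟨E, hE, ⟨f, hf⟩⟩ := this
  exact ⟨E, hE, ⟨f, fun v => by have := hf v; simp only at this ⊢; omega⟩⟩

lemma deg_nonneg_of_winnable {D : V → ℤ} (hw : Winnable G D) : 0 ≤ degDiv D := by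
  obtain ⟨E, hE, h⟩ := hw
  rw [linEquiv_deg G h]
  exact Finset.sum_nonneg (fun v _ => hE v)

def ind (A : Finset V) : V → ℤ := fun v => if v ∈ A then 1 else 0

lemma lap_ind_mem {A : Finset V} {v : V} (hv : v ∈ A) :
    lap G (ind A) v = (outdegOf G A v : ℤ) := by
  unfold lap ind outdegOf
  rw [if_pos hv]
  rw [← Finset.sum_filter_add_sum_filter_not (Finset.univ.filter (fun u => G.Adj v u))
    (fun u => u ∈ A)]
  have h1 : ∑ u ∈ (Finset.univ.filter (fun u => G.Adj v u)).filter (fun u => u ∈ A),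
      ((1:ℤ) - if u ∈ A then 1 else 0) = 0 := by
    apply Finset.sum_eq_zero; intro u hu
    rw [Finset.mem_filter] at hu
    rw [if_pos hu.2]; ring
  have h2 : ∑ u ∈ (Finset.univ.filter (fun u => G.Adj v u)).filter (fun u => ¬ u ∈ A),
      ((1:ℤ) - if u ∈ A then 1 else 0) =
      ((Finset.univ.filter (fun u => G.Adj v u ∧ u ∉ A)).card : ℤ) := by
    rw [Finset.filter_filter]
    have e : ∀ u ∈ Finset.univ.filter (fun u => G.Adj v u ∧ ¬ u ∈ A),
        ((1:ℤ) - if u ∈ A then 1 else 0) = 1 := by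
      intro u hu
      rw [Finset.mem_filter] at hu
      rw [if_neg hu.2.2]; ring
    rw [Finset.sum_congr rfl e, Finset.sum_const]
    simp
  rw [h1, h2]; ring

lemma lap_ind_not_mem {A : Finset V} {v : V} (hv : v ∉ A) :
    lap G (ind A) v ≤ 0 := by
  unfold lap ind
  rw [if_neg hv]
  apply Finset.sum_nonpos
  intro u _
  by_cases h : u ∈ A <;> simp [h]

/-- Phase 1: there is an equivalent divisor effective away from q. -/
lemma exists_effective_off (hG : G.Connected) (q : V) (D : V → ℤ) :
    ∃ D' : V → ℤ, LinEquiv G D D' ∧ ∀ v, v ≠ q → 0 ≤ D' v := by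
  obtain ⟨w, hwq, hwnn, hlapw⟩ := exists_potential G hG q
  set t : ℤ := ∑ v, max (- D v) 0 with htdef
  have ht0 : 0 ≤ t := Finset.sum_nonneg (fun v _ => le_max_right _ _)
  have ht : ∀ v, - D v ≤ t := by
    intro v
    calc - D v ≤ max (- D v) 0 := le_max_left _ _
      _ ≤ t := Finset.single_le_sum (f := fun v => max (- D v) 0)
          (fun v _ => le_max_right _ _) (Finset.mem_univ v)
  refine ⟨fun v => D v + t * lap G w v, ⟨fun v => - (t * w v), fun v => ?_⟩, fun v hv => ?_⟩
  · have h2 : ∑ u ∈ Finset.univ.filter (fun u => G.Adj v u), (-(t * w v) - -(t * w u))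
        = - (t * ∑ u ∈ Finset.univ.filter (fun u => G.Adj v u), (w v - w u)) := by
      rw [Finset.mul_sum, ← Finset.sum_neg_distrib]
      exact Finset.sum_congr rfl fun u _ => by ring
    simp only
    rw [h2]
    unfold lap
    ring
  · have h3 : 1 ≤ lap G w v := hlapw v hv
    have h4 := ht v
    have h5 : t * 1 ≤ t * lap G w v := mul_le_mul_of_nonneg_left h3 ht0
    simp only
    linarith

/-- Existence of a q-reduced divisor linearly equivalent to D. -/
lemma exists_qreduced (hG : G.Connected) (q : V) (D : V → ℤ) :
    ∃ D' : V → ℤ, LinEquiv G D D' ∧ QReduced G q D' := by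
  obtain ⟨w, hwq, hwnn, hlapw⟩ := exists_potential G hG q
  -- the set of achievable potentials
  set T : Set ℕ := { m : ℕ | ∃ D' : V → ℤ, LinEquiv G D D' ∧ (∀ v, v ≠ q → 0 ≤ D' v) ∧
    ∑ v, D' v * w v = (m : ℤ) } with hTdef
  have hΦnn : ∀ D' : V → ℤ, (∀ v, v ≠ q → 0 ≤ D' v) → 0 ≤ ∑ v, D' v * w v := by
    intro D' hD'
    apply Finset.sum_nonneg
    intro v _
    by_cases hv : v = q
    · rw [hv, hwq]; ring_nf; exact le_refl 0
    · exact mul_nonneg (hD' v hv) (hwnn v)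
  have hTne : T.Nonempty := by
    obtain ⟨D₁, hD₁equiv, hD₁⟩ := exists_effective_off G hG q D
    exact ⟨(∑ v, D₁ v * w v).toNat, D₁, hD₁equiv, hD₁,
      (Int.toNat_of_nonneg (hΦnn D₁ hD₁)).symm⟩
  set m₀ := sInf T with hm₀
  obtain ⟨D₂, hD₂equiv, hD₂eff, hD₂Φ⟩ := Nat.sInf_mem hTne
  refine ⟨D₂, hD₂equiv, hD₂eff, ?_⟩
  -- reducedness clause 2 by contradiction
  intro A hAne hqA
  by_contra hcon
  push_neg at hcon
  -- fire A
  set D₃ : V → ℤ := fun v => D₂ v - lap G (ind A) v with hD₃def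
  have hD₃equiv : LinEquiv G D D₃ := by
    apply linEquiv_trans G hD₂equiv
    exact ⟨ind A, fun v => by simp [hD₃def, lap]⟩
  have hD₃eff : ∀ v, v ≠ q → 0 ≤ D₃ v := by
    intro v hv
    by_cases hvA : v ∈ A
    · rw [hD₃def]; simp only
      rw [lap_ind_mem G hvA]
      have := hcon v hvA
      omega
    · rw [hD₃def]; simp only
      have := lap_ind_not_mem G (A := A) (v := v) hvA
      have := hD₂eff v hv
      omega
  -- potential strictly decreases
  have hΦ₃ : ∑ v, D₃ v * w v ≤ (m₀ : ℤ) - A.card := by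
    have hsplit : ∑ v, D₃ v * w v = ∑ v, D₂ v * w v - ∑ v, lap G (ind A) v * w v := by
      rw [← Finset.sum_sub_distrib]
      exact Finset.sum_congr rfl fun v _ => by rw [hD₃def]; ring
    rw [hsplit, hD₂Φ, lap_symm]
    have : (A.card : ℤ) ≤ ∑ v, ind A v * lap G w v := by
      have h1 : ∑ v, ind A v * lap G w v = ∑ v ∈ A, lap G w v := by
        rw [← Finset.sum_filter_add_sum_filter_not Finset.univ (fun v => v ∈ A)]
        have e1 : ∑ v ∈ Finset.univ.filter (fun v => v ∈ A), ind A v * lap G w v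
            = ∑ v ∈ A, lap G w v := by
          rw [Finset.filter_mem_eq_inter, Finset.univ_inter]
          exact Finset.sum_congr rfl fun v hv => by rw [ind, if_pos hv, one_mul]
        have e2 : ∑ v ∈ Finset.univ.filter (fun v => ¬ v ∈ A), ind A v * lap G w v = 0 :=
          Finset.sum_eq_zero fun v hv => by
            rw [Finset.mem_filter] at hv
            rw [ind, if_neg hv.2, zero_mul]
        rw [e1, e2]; ring
      rw [h1]
      calc (A.card : ℤ) = ∑ _v ∈ A, (1:ℤ) := by simp
        _ ≤ ∑ v ∈ A, lap G w v := Finset.sum_le_sum fun v hv =>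
            hlapw v (fun h => hqA (h ▸ hv))
    omega
  have hcard : 0 < A.card := Finset.card_pos.mpr hAne
  have : ((∑ v, D₃ v * w v).toNat) ∈ T :=
    ⟨D₃, hD₃equiv, hD₃eff, (Int.toNat_of_nonneg (hΦnn D₃ hD₃eff)).symm⟩
  have hge := Nat.sInf_le this
  rw [← hm₀] at hge
  have h5 := hΦnn D₃ hD₃eff
  omega

/-- a q-reduced divisor that is winnable is nonnegative at q (hence effective). -/
lemma qreduced_winnable_nonneg {q : V} {D : V → ℤ} (hred : QReduced G q D)
    (hw : Winnable G D) : 0 ≤ D q := by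
  obtain ⟨E, hE, f, hf⟩ := hw
  -- let M be the max of f, attained on the set Amax
  obtain ⟨v₀, _, hv₀⟩ := Finset.exists_max_image Finset.univ f ⟨q, Finset.mem_univ q⟩
  set M := f v₀ with hM
  set Amax : Finset V := Finset.univ.filter (fun v => f v = M) with hAmax
  have hv₀mem : v₀ ∈ Amax := by simp [hAmax, hM]
  -- q is in Amax: otherwise Amax violates reducedness
  have hqAmax : q ∈ Amax := by
    by_contra hq
    obtain ⟨v, hvA, hvlt⟩ := hred.2 Amax ⟨v₀, hv₀mem⟩ hq
    rw [Finset.mem_filter] at hvA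
    have hfv : f v = M := hvA.2
    -- D v = E v + lap f v ≥ lap f v ≥ outdeg
    have hDv : D v = E v + lap G f v := by have := hf v; unfold lap; omega
    have hlap : (outdegOf G Amax v : ℤ) ≤ lap G f v := by
      unfold lap outdegOf
      have hsub : Finset.univ.filter (fun u => G.Adj v u ∧ u ∉ Amax)
          ⊆ Finset.univ.filter (fun u => G.Adj v u) := by
        intro u hu; rw [Finset.mem_filter] at *; exact ⟨hu.1, hu.2.1⟩
      calc ((Finset.univ.filter (fun u => G.Adj v u ∧ u ∉ Amax)).card : ℤ)
          = ∑ _u ∈ Finset.univ.filter (fun u => G.Adj v u ∧ u ∉ Amax), (1:ℤ) := by simp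
        _ ≤ ∑ u ∈ Finset.univ.filter (fun u => G.Adj v u ∧ u ∉ Amax), (f v - f u) := by
            apply Finset.sum_le_sum
            intro u hu
            rw [Finset.mem_filter] at hu
            have hune : f u ≠ M := by
              intro h; exact hu.2.2 (by simp [hAmax, h])
            have hule : f u ≤ M := hv₀ u (Finset.mem_univ u)
            rw [hfv]; omega
        _ ≤ ∑ u ∈ Finset.univ.filter (fun u => G.Adj v u), (f v - f u) := by
            apply Finset.sum_le_sum_of_subset_of_nonneg hsub
            intro u hu _
            have hule : f u ≤ M := hv₀ u (Finset.mem_univ u)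
            rw [hfv]; omega
    have hEv := hE v
    omega
  -- hence f q = M and lap f q ≥ 0, so D q = E q + lap f q ≥ 0
  rw [Finset.mem_filter] at hqAmax
  have hDq : D q = E q + lap G f q := by have := hf q; unfold lap; omega
  have hlapq : 0 ≤ lap G f q := by
    apply Finset.sum_nonneg
    intro u _
    have := hv₀ u (Finset.mem_univ u)
    rw [hqAmax.2]; omega
  have := hE q
  omega

/-- burning threshold: number of earlier burnt neighbours -/
def thr (l : List V) (i : Fin l.length) : ℕ :=
  ((l.take i.1).toFinset.filter (fun u => G.Adj u (l.get i))).card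

/-- a list is a burning certificate for `D` -/
def Good (D : V → ℤ) (l : List V) : Prop :=
  ∀ i : Fin l.length, 0 < i.1 → D (l.get i) < (thr G l i : ℤ)

lemma get_append_left (l : List V) (v : V) (i : Fin l.length) :
    (l ++ [v]).get ⟨i.1, by simp⟩ = l.get i := by
  simp [List.get_eq_getElem, List.getElem_append_left i.2]

lemma get_append_last (l : List V) (v : V) :
    (l ++ [v]).get ⟨l.length, by simp⟩ = v := by
  simp [List.get_eq_getElem]

lemma take_append_left (l : List V) (v : V) (i : ℕ) (h : i ≤ l.length) :
    (l ++ [v]).take i = l.take i := by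
  rw [List.take_append_of_le_length h]

lemma thr_append_left (l : List V) (v : V) (i : Fin l.length) :
    thr G (l ++ [v]) ⟨i.1, by simp⟩ = thr G l i := by
  unfold thr
  rw [take_append_left l v i.1 (le_of_lt i.2)]
  congr 1
  rw [get_append_left]

lemma thr_append_last (l : List V) (v : V) :
    thr G (l ++ [v]) ⟨l.length, by simp⟩ = (l.toFinset.filter (fun u => G.Adj u v)).card := by
  unfold thr
  simp only [get_append_last]
  congr 2
  simp [List.take_left]

/-- outdeg wrt the complement of the burnt set equals number of burnt neighbours -/
lemma outdeg_compl (l : List V) (v : V) :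
    outdegOf G (l.toFinsetᶜ) v = (l.toFinset.filter (fun u => G.Adj u v)).card := by
  unfold outdegOf
  apply Finset.card_bij (fun u _ => u)
  · intro u hu
    rw [Finset.mem_filter] at *
    simp only [Finset.mem_compl, not_not] at hu
    exact ⟨hu.2.2, hu.2.1.symm⟩
  · intro a ha b hb h; exact h
  · intro u hu
    rw [Finset.mem_filter] at hu
    refine ⟨u, ?_, rfl⟩
    rw [Finset.mem_filter]
    simp only [Finset.mem_compl, not_not, Finset.mem_univ, true_and]
    exact ⟨hu.2.symm, hu.1⟩

lemma good_extend {q : V} {D : V → ℤ} (hred : QReduced G q D)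
    (l : List V) (hq : q ∈ l) (hnd : l.Nodup) (hgood : Good G D l)
    (hne : l.toFinset ≠ Finset.univ) :
    ∃ v, v ∉ l ∧ (l ++ [v]).Nodup ∧ Good G D (l ++ [v]) := by
  have hA : (l.toFinsetᶜ : Finset V).Nonempty := by
    rw [← Finset.card_pos, Finset.card_compl]
    have : l.toFinset.card < Fintype.card V := by
      have hle : l.toFinset.card ≤ Fintype.card V := Finset.card_le_card (Finset.subset_univ _)
      rcases lt_or_eq_of_le hle with h | h
      · exact h
      · exact absurd (Finset.eq_univ_of_card _ h) hne
    omega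
  have hqA : q ∉ (l.toFinsetᶜ : Finset V) := by
    simp [List.mem_toFinset, hq]
  obtain ⟨v, hvA, hvlt⟩ := hred.2 _ hA hqA
  rw [Finset.mem_compl, List.mem_toFinset] at hvA
  rw [outdeg_compl] at hvlt
  refine ⟨v, hvA, ?_, ?_⟩
  · rw [List.nodup_append]
    exact ⟨hnd, List.nodup_singleton v, by simp [hvA]; rintro a ha rfl; exact hvA ha⟩
  · intro i hi
    have hlen : (l ++ [v]).length = l.length + 1 := by simp
    by_cases hilt : i.1 < l.length
    · have : i = ⟨(⟨i.1, hilt⟩ : Fin l.length).1, by simp; omega⟩ := by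
        apply Fin.ext; rfl
      rw [this, thr_append_left, get_append_left]
      exact hgood ⟨i.1, hilt⟩ hi
    · have hi2 : i.1 < l.length + 1 := by have := i.2; simpa using this
      have hieq : i.1 = l.length := by omega
      have : i = ⟨l.length, by simp⟩ := by apply Fin.ext; exact hieq
      rw [this, thr_append_last, get_append_last]
      omega
 
/-- existence of a full burning certificate starting at q -/
lemma exists_good_list {q : V} {D : V → ℤ} (hred : QReduced G q D) :
    ∃ l : List V, l.Nodup ∧ l.toFinset = Finset.univ ∧
      (∃ t, l = q :: t) ∧ Good G D l := by
  -- induct on the number of unburnt vertices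
  suffices h : ∀ k (l : List V), q ∈ l → l.Nodup → Good G D l →
      Fintype.card V = l.length + k →
      ∃ l' : List V, l'.Nodup ∧ l'.toFinset = Finset.univ ∧ (∃ t, l' = l ++ t) ∧ Good G D l' by
    have hq1 : Fintype.card V = [q].length + (Fintype.card V - 1) := by
      have : 0 < Fintype.card V := Fintype.card_pos_iff.mpr ⟨q⟩
      simp; omega
    obtain ⟨l', h1, h2, ⟨t, ht⟩, h4⟩ := h (Fintype.card V - 1) [q] (by simp) (by simp)
      (fun i hi => by
        have : i.1 = 0 := by have := i.2; simp at this; omega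
        omega) hq1
    exact ⟨l', h1, h2, ⟨t, by simpa using ht⟩, h4⟩
  intro k
  induction k with
  | zero =>
    intro l hql hnd hgood hcard
    refine ⟨l, hnd, ?_, ⟨[], by simp⟩, hgood⟩
    apply Finset.eq_univ_of_card
    rw [List.toFinset_card_of_nodup hnd]
    omega
  | succ k ih =>
    intro l hql hnd hgood hcard
    have hne : l.toFinset ≠ Finset.univ := by
      intro h
      have := Finset.card_univ (α := V)
      rw [← h, List.toFinset_card_of_nodup hnd] at this
      omega
    obtain ⟨v, hv, hnd', hgood'⟩ := good_extend G hred l hql hnd hgood hne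
    obtain ⟨l', h1, h2, ⟨t, ht⟩, h4⟩ := ih (l ++ [v]) (by simp [hql]) hnd' hgood'
      (by simp; omega)
    exact ⟨l', h1, h2, ⟨v :: t, by simp [ht]⟩, h4⟩

lemma mem_take_get (l : List V) (k : ℕ) (u : V) (hu : u ∈ l.take k) :
    ∃ j : Fin l.length, j.1 < k ∧ l.get j = u := by
  obtain ⟨j, hj⟩ := List.mem_iff_get.mp hu
  have hjlt : j.1 < min k l.length := by
    have := j.2; simpa [List.length_take] using this
  have h1 : j.1 < l.length := lt_of_lt_of_le hjlt (min_le_right _ _)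
  have h2 : j.1 < k := lt_of_lt_of_le hjlt (min_le_left _ _)
  refine ⟨⟨j.1, h1⟩, h2, ?_⟩
  rw [← hj]
  simp [List.get_eq_getElem, List.getElem_take]

lemma qreduced_of_good {q : V} {D : V → ℤ} (l : List V) (hnd : l.Nodup)
    (huniv : l.toFinset = Finset.univ) (hhead : ∃ t, l = q :: t)
    (h0 : ∀ v, v ≠ q → 0 ≤ D v) (hgood : Good G D l) : QReduced G q D := by
  refine ⟨h0, ?_⟩
  intro A hAne hqA
  obtain ⟨t, ht⟩ := hhead
  subst ht
  have hlen0 : 0 < (q :: t).length := by simp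
  have hget0 : (q :: t).get ⟨0, hlen0⟩ = q := rfl
  set l := q :: t with hl
  set I : Finset (Fin l.length) := Finset.univ.filter (fun i => l.get i ∈ A) with hI
  have hIne : I.Nonempty := by
    obtain ⟨a, ha⟩ := hAne
    have : a ∈ l := by rw [← List.mem_toFinset, huniv]; exact Finset.mem_univ a
    obtain ⟨i, hi⟩ := List.mem_iff_get.mp this
    have h5 : l.get i ∈ A := by rw [hi]; exact ha
    exact ⟨i, by rw [hI, Finset.mem_filter]; exact ⟨Finset.mem_univ i, h5⟩⟩
  obtain ⟨i₀, hi₀I, hi₀min⟩ := Finset.exists_min_image I (fun i => i.1) hIne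
  rw [hI, Finset.mem_filter] at hi₀I
  have hvA : l.get i₀ ∈ A := hi₀I.2
  have hi₀pos : 0 < i₀.1 := by
    rcases Nat.eq_zero_or_pos i₀.1 with h | h
    · exfalso
      have he : i₀ = ⟨0, hlen0⟩ := Fin.ext h
      rw [he, hget0] at hvA
      exact hqA hvA
    · exact h
  have hthr : (thr G l i₀ : ℤ) ≤ (outdegOf G A (l.get i₀) : ℤ) := by
    have hsub : (l.take i₀.1).toFinset.filter (fun u => G.Adj u (l.get i₀))
        ⊆ Finset.univ.filter (fun u => G.Adj (l.get i₀) u ∧ u ∉ A) := by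
      intro u hu
      rw [Finset.mem_filter] at *
      obtain ⟨hu1, hu2⟩ := hu
      rw [List.mem_toFinset] at hu1
      obtain ⟨j, hjlt, hju⟩ := mem_take_get l i₀.1 u hu1
      have hunotA : u ∉ A := by
        intro huA
        have hjA : l.get j ∈ A := by rw [hju]; exact huA
        have hjI : j ∈ I := by rw [hI, Finset.mem_filter]; exact ⟨Finset.mem_univ j, hjA⟩
        have := hi₀min j hjI
        omega
      exact ⟨Finset.mem_univ u, hu2.symm, hunotA⟩
    have := Finset.card_le_card hsub
    unfold thr outdegOf
    exact_mod_cast this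
  have := hgood i₀ hi₀pos
  refine ⟨l.get i₀, hvA, ?_⟩
  omega

lemma good_update {D : V → ℤ} {l : List V} (hgood : Good G D l) (v₀ : V)
    (h : ∀ i : Fin l.length, 0 < i.1 → l.get i = v₀ → D v₀ + 1 < (thr G l i : ℤ)) :
    Good G (fun v => D v + if v = v₀ then 1 else 0) l := by
  intro i hi
  by_cases he : l.get i = v₀
  · simp only [he, if_pos rfl]
    have := h i hi he
    omega
  · simp only [if_neg he]
    have := hgood i hi
    omega

def thrN (l : List V) (i : ℕ) : ℕ := if h : i < l.length then thr G l ⟨i, h⟩ else 0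

def valN (D : V → ℤ) (l : List V) (i : ℕ) : ℤ :=
  if h : i < l.length then D (l.get ⟨i, h⟩) else 0

def edgesIn (S : Finset V) : ℕ := (G.edgeFinset.filter (· ∈ S.sym2)).card

lemma edgesIn_insert {S : Finset V} {v : V} (hv : v ∉ S) :
    edgesIn G (insert v S) = edgesIn G S + (S.filter (fun u => G.Adj u v)).card := by
  unfold edgesIn
  have hadjc : S.filter (fun u => G.Adj u v) = S.filter (G.Adj v) :=
    Finset.filter_congr fun u _ => by rw [G.adj_comm]
  rw [hadjc]
  rw [← Finset.card_filter_add_card_filter_not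
    (s := G.edgeFinset.filter (· ∈ (insert v S).sym2)) (p := fun e => v ∈ e)]
  rw [Finset.filter_filter, Finset.filter_filter]
  have hA : (G.edgeFinset.filter (fun e => e ∈ (insert v S).sym2 ∧ v ∈ e)).card
      = (S.filter (G.Adj v)).card := by
    rw [eq_comm]
    apply Finset.card_bij (fun u _ => s(v, u))
    · intro u hu
      rw [Finset.mem_filter] at *
      obtain ⟨huS, hadj⟩ := hu
      refine ⟨by rwa [SimpleGraph.mem_edgeFinset, SimpleGraph.mem_edgeSet], ?_, ?_⟩
      · rw [Finset.mem_sym2_iff]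
        intro y hy
        rcases Sym2.mem_iff.mp hy with h | h
        · rw [h]; exact Finset.mem_insert_self v S
        · rw [h]; exact Finset.mem_insert_of_mem huS
      · exact Sym2.mem_mk_left v u
    · intro a ha b hb h
      exact Sym2.congr_right.mp h
    · intro e he
      rw [Finset.mem_filter] at he
      obtain ⟨heE, heins, hve⟩ := he
      set u := Sym2.Mem.other' hve with hu
      have hspec : s(v, u) = e := Sym2.other_spec' hve
      have hadj : G.Adj v u := by
        rw [← SimpleGraph.mem_edgeSet, hspec]
        rwa [SimpleGraph.mem_edgeFinset] at heE
      have huS : u ∈ S := by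
        rw [Finset.mem_sym2_iff] at heins
        have humem : u ∈ e := by rw [← hspec]; exact Sym2.mem_mk_right v u
        have := heins u humem
        rcases Finset.mem_insert.mp this with h | h
        · exact absurd h.symm (G.ne_of_adj hadj)
        · exact h
      exact ⟨u, Finset.mem_filter.mpr ⟨huS, hadj⟩, hspec⟩
  have hB : G.edgeFinset.filter (fun e => e ∈ (insert v S).sym2 ∧ ¬ v ∈ e)
      = G.edgeFinset.filter (fun e => e ∈ S.sym2) := by
    ext e
    rw [Finset.mem_filter, Finset.mem_filter]
    constructor
    · rintro ⟨heE, heins, hve⟩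
      refine ⟨heE, ?_⟩
      rw [Finset.mem_sym2_iff] at *
      intro y hy
      rcases Finset.mem_insert.mp (heins y hy) with h | h
      · exact absurd (h ▸ hy) hve
      · exact h
    · rintro ⟨heE, heS⟩
      rw [Finset.mem_sym2_iff] at *
      exact ⟨heE, fun y hy => Finset.mem_insert_of_mem (heS y hy), fun hve => hv (heS v hve)⟩
  rw [hA, hB, Nat.add_comm]

lemma sum_thrN (l : List V) (hnd : l.Nodup) :
    ∑ i ∈ Finset.range l.length, thrN G l i = edgesIn G l.toFinset := by
  induction l using List.reverseRecOn with
  | nil =>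
    simp [edgesIn]
  | append_singleton l v ih =>
    rw [List.nodup_append] at hnd
    have hvl : v ∉ l := by
      intro h
      exact hnd.2.2 v h v (by simp) rfl
    have hlen : (l ++ [v]).length = l.length + 1 := by simp
    rw [hlen, Finset.sum_range_succ]
    have h1 : ∀ i ∈ Finset.range l.length, thrN G (l ++ [v]) i = thrN G l i := by
      intro i hi
      rw [Finset.mem_range] at hi
      unfold thrN
      rw [dif_pos (by simp; omega : i < (l ++ [v]).length), dif_pos hi]
      have := thr_append_left G l v ⟨i, hi⟩
      convert this using 2
    have h2 : thrN G (l ++ [v]) l.length = (l.toFinset.filter (fun u => G.Adj u v)).card := by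
      unfold thrN
      rw [dif_pos (by simp : l.length < (l ++ [v]).length)]
      have := thr_append_last G l v
      convert this using 2
    rw [Finset.sum_congr rfl h1, h2, ih hnd.1]
    have htf : (l ++ [v]).toFinset = insert v l.toFinset := by
      ext a; simp [List.toFinset_append, or_comm]
    rw [htf, edgesIn_insert G (by simpa using hvl)]

lemma sum_valN (D : V → ℤ) (l : List V) (hnd : l.Nodup) :
    ∑ i ∈ Finset.range l.length, valN D l i = ∑ v ∈ l.toFinset, D v := by
  induction l using List.reverseRecOn with
  | nil => simp
  | append_singleton l v ih =>
    rw [List.nodup_append] at hnd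
    have hvl : v ∉ l := by
      intro h
      exact hnd.2.2 v h v (by simp) rfl
    have hlen : (l ++ [v]).length = l.length + 1 := by simp
    rw [hlen, Finset.sum_range_succ]
    have h1 : ∀ i ∈ Finset.range l.length, valN D (l ++ [v]) i = valN D l i := by
      intro i hi
      rw [Finset.mem_range] at hi
      unfold valN
      rw [dif_pos (by simp; omega : i < (l ++ [v]).length), dif_pos hi]
      congr 1
      simp [List.get_eq_getElem, List.getElem_append_left hi]
    have h2 : valN D (l ++ [v]) l.length = D v := by
      unfold valN
      rw [dif_pos (by simp : l.length < (l ++ [v]).length)]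
      congr 1
      simp [List.get_eq_getElem]
    rw [Finset.sum_congr rfl h1, h2, ih hnd.1]
    have htf : (l ++ [v]).toFinset = insert v l.toFinset := by
      ext a; simp [List.toFinset_append, or_comm]
    rw [htf, Finset.sum_insert (by simpa using hvl)]
    ring

lemma qreduced_neg_unwinnable {q : V} {D : V → ℤ} (hred : QReduced G q D)
    (hneg : D q < 0) : ¬ Winnable G D := fun hw => by
  have := qreduced_winnable_nonneg G hred hw
  omega

lemma qreduced_add_q {q : V} {D : V → ℤ} (hred : QReduced G q D) :
    QReduced G q (fun v => D v + if v = q then 1 else 0) := by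
  constructor
  · intro v hv
    simp only [if_neg hv, add_zero]
    exact hred.1 v hv
  · intro A hA hqA
    obtain ⟨v, hvA, hlt⟩ := hred.2 A hA hqA
    refine ⟨v, hvA, ?_⟩
    have hvq : v ≠ q := fun h => hqA (h ▸ hvA)
    simp only [if_neg hvq, add_zero]
    exact hlt

/-- STAR: an unwinnable divisor of degree ≤ g-2 stays unwinnable after adding
some chip. -/
lemma star (hG : G.Connected) {W : V → ℤ} (hunwin : ¬ Winnable G W)
    (hdeg : degDiv W ≤ graphGenus G - 2) :
    ∃ v : V, ¬ Winnable G (fun u => W u + if u = v then 1 else 0) := by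
  have hne : Nonempty V := hG.nonempty
  obtain ⟨q⟩ := hne
  obtain ⟨W₀, hequiv, hred⟩ := exists_qreduced G hG q W
  have hW₀unwin : ¬ Winnable G W₀ := fun h => hunwin (winnable_of_linEquiv G hequiv h)
  have hW₀q : W₀ q < 0 := by
    by_contra h
    push_neg at h
    apply hW₀unwin
    refine ⟨W₀, ?_, ⟨fun _ => 0, fun v => by simp⟩⟩
    intro v
    by_cases hv : v = q
    · rw [hv]; exact h
    · exact hred.1 v hv
  -- helper to transfer unwinnability back to W
  have htransfer : ∀ v : V, ¬ Winnable G (fun u => W₀ u + if u = v then 1 else 0) →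
      ¬ Winnable G (fun u => W u + if u = v then 1 else 0) := by
    intro v h hw
    apply h
    obtain ⟨f, hf⟩ := hequiv
    exact winnable_of_linEquiv G (D' := fun u => W u + if u = v then 1 else 0)
      ⟨fun u => -f u, fun u => by
        have h2 : ∑ x ∈ Finset.univ.filter (fun x => G.Adj u x), (-f u - -f x)
            = - ∑ x ∈ Finset.univ.filter (fun x => G.Adj u x), (f u - f x) := by
          rw [← Finset.sum_neg_distrib]; exact Finset.sum_congr rfl fun x _ => by ring
        simp only
        rw [h2, ← hf u]; ring⟩ hw
  by_cases hq2 : W₀ q ≤ -2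
  · refine ⟨q, htransfer q ?_⟩
    apply qreduced_neg_unwinnable G (qreduced_add_q G hred)
    simp only [if_pos rfl]
    omega
  -- now W₀ q = -1
  have hq1 : W₀ q = -1 := by omega
  obtain ⟨l, hnd, huniv, ⟨t, hlt⟩, hgood⟩ := exists_good_list G hred
  subst hlt
  set l : List V := q :: t with hldef
  by_cases hslack : ∃ i : Fin l.length, 0 < i.1 ∧ W₀ (l.get i) + 1 < (thr G l i : ℤ)
  · obtain ⟨i₀, hi₀pos, hi₀slack⟩ := hslack
    set v := l.get i₀ with hv
    have hvq : v ≠ q := by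
      intro h
      have hlen0 : 0 < l.length := by simp [hldef]
      have hget0 : l.get ⟨0, hlen0⟩ = q := rfl
      have : (⟨0, hlen0⟩ : Fin l.length) = i₀ :=
        (List.Nodup.get_inj_iff hnd).mp (by rw [hget0, ← h])
      rw [← this] at hi₀pos
      simp at hi₀pos
    refine ⟨v, htransfer v ?_⟩
    apply qreduced_neg_unwinnable G (q := q)
    · apply qreduced_of_good G l hnd huniv ⟨t, rfl⟩
      · intro u hu
        by_cases h : u = v
        · rw [if_pos h]
          have := hred.1 u hu
          omega
        · rw [if_neg h, add_zero]
          exact hred.1 u hu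
      · apply good_update G hgood v
        intro i hipos hiv
        have : i = i₀ := (List.Nodup.get_inj_iff hnd).mp (by rw [hiv, hv])
        rw [this]
        exact hi₀slack
    · show W₀ q + (if q = v then 1 else 0) < 0
      rw [if_neg (fun h => hvq h.symm)]
      omega
  · -- no slack: degree is exactly g - 1, contradiction
    exfalso
    push_neg at hslack
    have heq : ∀ i : Fin l.length, 0 < i.1 → W₀ (l.get i) = (thr G l i : ℤ) - 1 := by
      intro i hi
      have h1 := hgood i hi
      have h2 := hslack i hi
      omega
    have hlen0 : 0 < l.length := by simp [hldef]
    have hlen : l.length = Fintype.card V := by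
      rw [← List.toFinset_card_of_nodup hnd, huniv, Finset.card_univ]
    -- compute the degree
    have hval0 : valN W₀ l 0 = W₀ q := by
      unfold valN
      rw [dif_pos hlen0]
      rfl
    have hthr0 : thrN G l 0 = 0 := by
      unfold thrN
      rw [dif_pos hlen0]
      unfold thr
      simp
    have hvalthr : ∀ i ∈ Finset.Ico 1 l.length, valN W₀ l i = (thrN G l i : ℤ) - 1 := by
      intro i hi
      rw [Finset.mem_Ico] at hi
      unfold valN thrN
      rw [dif_pos hi.2, dif_pos hi.2]
      exact heq ⟨i, hi.2⟩ hi.1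
    have hdegW₀ : degDiv W₀ = ∑ i ∈ Finset.range l.length, valN W₀ l i := by
      unfold degDiv
      rw [sum_valN W₀ l hnd, huniv]
    have hsplit : ∑ i ∈ Finset.range l.length, valN W₀ l i
        = valN W₀ l 0 + ∑ i ∈ Finset.Ico 1 l.length, valN W₀ l i := by
      rw [Finset.range_eq_Ico, Finset.sum_eq_sum_Ico_succ_bot hlen0]
    have hico : ∑ i ∈ Finset.Ico 1 l.length, valN W₀ l i
        = (∑ i ∈ Finset.Ico 1 l.length, (thrN G l i : ℤ)) - (l.length - 1) := by
      rw [Finset.sum_congr rfl hvalthr, Finset.sum_sub_distrib]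
      congr 1
      rw [Finset.sum_const, Nat.card_Ico]
      simp only [nsmul_eq_mul, mul_one]
      omega
    have hthrsum : ∑ i ∈ Finset.Ico 1 l.length, (thrN G l i : ℤ)
        = (edgesIn G Finset.univ : ℤ) := by
      have h1 : ∑ i ∈ Finset.range l.length, (thrN G l i : ℤ)
          = (edgesIn G l.toFinset : ℤ) := by
        rw [← Nat.cast_sum]
        exact_mod_cast congrArg (Nat.cast : ℕ → ℤ) (sum_thrN G l hnd)
      rw [huniv] at h1
      rw [← h1, Finset.range_eq_Ico, Finset.sum_eq_sum_Ico_succ_bot hlen0, hthr0]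
      simp
    have hedges : edgesIn G Finset.univ = G.edgeFinset.card := by
      unfold edgesIn
      congr 1
      apply Finset.filter_true_of_mem
      intro e _
      rw [Finset.mem_sym2_iff]
      intro y _
      exact Finset.mem_univ y
    have hdegeq : degDiv W₀ = (G.edgeFinset.card : ℤ) - Fintype.card V := by
      rw [hdegW₀, hsplit, hval0, hico, hthrsum, hedges, hq1, hlen]
      have : 0 < Fintype.card V := Fintype.card_pos_iff.mpr ⟨q⟩
      push_cast
      ring
    have hdegW : degDiv W = degDiv W₀ := linEquiv_deg G hequiv
    unfold graphGenus at hdeg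
    omega

lemma degDiv_add (X Y : V → ℤ) : degDiv (fun v => X v + Y v) = degDiv X + degDiv Y := by
  unfold degDiv; rw [← Finset.sum_add_distrib]

lemma degDiv_delta (v₀ : V) (c : ℤ) : degDiv (fun v => if v = v₀ then c else 0) = c := by
  unfold degDiv
  rw [Finset.sum_ite_eq' Finset.univ v₀ (fun _ => c)]
  simp

/-- iterate star -/
lemma add_chips (hG : G.Connected) :
    ∀ (j : ℕ) (W : V → ℤ), ¬ Winnable G W → degDiv W + j ≤ graphGenus G - 1 →
    ∃ A : V → ℤ, (∀ v, 0 ≤ A v) ∧ degDiv A = j ∧ ¬ Winnable G (fun v => W v + A v) := by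
  intro j
  induction j with
  | zero =>
    intro W hunwin _
    exact ⟨fun _ => 0, fun v => le_refl 0, by simp [degDiv], by simpa using hunwin⟩
  | succ j ih =>
    intro W hunwin hdeg
    obtain ⟨v, hv⟩ := star G hG hunwin (by push_cast at hdeg ⊢; omega)
    obtain ⟨A', hA'nn, hA'deg, hA'unwin⟩ := ih (fun u => W u + if u = v then 1 else 0) hv
      (by rw [degDiv_add, degDiv_delta]; push_cast at hdeg ⊢; omega)
    refine ⟨fun u => (if u = v then 1 else 0) + A' u, ?_, ?_, ?_⟩
    · intro u
      have h2 := hA'nn v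
      have h3 := hA'nn u
      by_cases h : u = v <;> simp [h] <;> omega
    · rw [show (fun u => (if u = v then (1:ℤ) else 0) + A' u)
          = (fun u => (fun w => if w = v then (1:ℤ) else 0) u + A' u) from rfl,
        degDiv_add, degDiv_delta, hA'deg]
      push_cast
      ring
    · have hfe : (fun u => W u + ((if u = v then (1:ℤ) else 0) + A' u))
          = (fun u => (W u + if u = v then 1 else 0) + A' u) := by
        funext u; ring
      rw [hfe]
      exact hA'unwin

/-- the rank set -/
def rset (D : V → ℤ) : Set ℕ :=
  { n : ℕ | ∃ E : V → ℤ, EffectiveDiv E ∧ degDiv E = (n : ℤ) ∧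
      ¬ Winnable G (fun v => D v - E v) }

lemma divisorRank_eq (D : V → ℤ) : divisorRank G D = ((sInf (rset G D) : ℕ) : ℤ) - 1 := rfl

lemma rset_nonempty (hG : G.Connected) (D : V → ℤ) : (rset G D).Nonempty := by
  obtain ⟨v₀⟩ := hG.nonempty
  set n : ℕ := (degDiv D).toNat + 1 with hn
  refine ⟨n, fun v => if v = v₀ then (n:ℤ) else 0, ?_, degDiv_delta v₀ (n:ℤ), ?_⟩
  · intro v; by_cases h : v = v₀ <;> simp [h]
  · intro hw
    have hdeg := deg_nonneg_of_winnable G hw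
    have : degDiv (fun v => D v - if v = v₀ then (n:ℤ) else 0)
        = degDiv D - n := by
      have : (fun v => D v - if v = v₀ then (n:ℤ) else 0)
          = (fun v => D v + (fun u => if u = v₀ then -(n:ℤ) else 0) v) := by
        funext v; by_cases h : v = v₀ <;> simp [h] <;> ring
      rw [this, degDiv_add, degDiv_delta]
      ring
    rw [this] at hdeg
    omega

lemma rset_mono {D : V → ℤ} (A : V → ℤ) (hA : ∀ v, 0 ≤ A v) :
    rset G (fun v => D v + A v) ⊆ rset G D := by
  intro n ⟨E, hEeff, hEdeg, hEunwin⟩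
  refine ⟨E, hEeff, hEdeg, ?_⟩
  intro hw
  apply hEunwin
  have : (fun v => (D v + A v) - E v) = (fun v => (fun u => D u - E u) v + A v) := by
    funext v; ring
  rw [this]
  exact winnable_add_effective G hA hw

end RR1Aux

/-- Strong RR1: If `deg D = k ≤ g - 1` then there exists `D' ≥ D`
with `deg D' = g - 1` and `r(D') = r(D)`. -/
theorem stmt14 {V : Type*} [Fintype V] [DecidableEq V] (G : SimpleGraph V)
    [DecidableRel G.Adj] (hG : G.Connected)
    (D : V → ℤ) (hD : degDiv D ≤ graphGenus G - 1) :
    ∃ D' : V → ℤ, (∀ v, D v ≤ D' v) ∧ degDiv D' = graphGenus G - 1 ∧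
      divisorRank G D' = divisorRank G D := by
  classical
  open RR1Aux in
  have hPne := rset_nonempty G hG D
  set m := sInf (rset G D) with hm
  obtain ⟨E, hEeff, hEdeg, hEunwin⟩ : m ∈ rset G D := Nat.sInf_mem hPne
  set j : ℕ := (graphGenus G - 1 - degDiv D).toNat with hj
  have hjcast : (j : ℤ) = graphGenus G - 1 - degDiv D := Int.toNat_of_nonneg (by omega)
  have hWdeg : degDiv (fun v => D v - E v) = degDiv D - m := by
    unfold degDiv
    rw [Finset.sum_sub_distrib]
    have : ∑ v, E v = (m : ℤ) := hEdeg
    rw [this]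
  obtain ⟨A, hAnn, hAdeg, hAunwin⟩ := add_chips G hG j (fun v => D v - E v) hEunwin
    (by rw [hWdeg]; have : (0:ℤ) ≤ m := Int.natCast_nonneg m; omega)
  refine ⟨fun v => D v + A v, fun v => le_add_of_nonneg_right (hAnn v), ?_, ?_⟩
  · rw [degDiv_add, hAdeg]
    omega
  · rw [divisorRank_eq, divisorRank_eq]
    have hmem' : m ∈ rset G (fun v => D v + A v) := by
      refine ⟨E, hEeff, hEdeg, ?_⟩
      have hfe : (fun v => (D v + A v) - E v) = (fun v => (fun u => D u - E u) v + A v) := by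
        funext v; ring
      rw [hfe]
      exact hAunwin
    have h1 : sInf (rset G (fun v => D v + A v)) ≤ m := Nat.sInf_le hmem'
    have h2 : m ≤ sInf (rset G (fun v => D v + A v)) := by
      have h3 := Nat.sInf_mem (⟨m, hmem'⟩ : (rset G (fun v => D v + A v)).Nonempty)
      exact Nat.sInf_le (rset_mono G A hAnn h3)
    rw [le_antisymm h1 h2]
end

section
/- Let G be a finite connected simple graph, q a vertex of G, and O a partial orientation of G which is either sourceless or whose unique source is q (every vertex other than q has at least one edge oriented towards it). Then O is equivalent in the generalized cocycle reversal system (by a finite sequence of edge pivots and cocycle reversals) to a q-connected partial orientation. -/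
namespace Stmt15Aux

attribute [local instance] Classical.propDecidable
set_option linter.unusedSectionVars false

open PartialOrientation

variable {V : Type*} [DecidableEq V] {G : SimpleGraph V}

/-- Reachability from `q` by directed edges of `O`. -/
def Reach (O : PartialOrientation G) (q v : V) : Prop :=
  Relation.ReflTransGen (fun a b => O.dir a b = true) q v

lemma reach_refl (O : PartialOrientation G) (q : V) : Reach O q q :=
  Relation.ReflTransGen.refl

lemma reach_tail {O : PartialOrientation G} {q a b : V}
    (h : Reach O q a) (hd : O.dir a b = true) : Reach O q b :=
  Relation.ReflTransGen.tail h hd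

/-- The orientation after an edge pivot at `x`: unorient `u0 → x`, orient `y → x`. -/
def pivotO (O : PartialOrientation G) (x y u0 : V) (hadj : G.Adj y x)
    (hyx : O.dir y x = false) (hxy : O.dir x y = false) : PartialOrientation G where
  dir a b := decide ((a = y ∧ b = x) ∨ (O.dir a b = true ∧ ¬(a = u0 ∧ b = x)))
  adj_of_dir := by
    intro a b h
    rw [decide_eq_true_iff] at h
    rcases h with ⟨rfl, rfl⟩ | ⟨h, _⟩
    · exact hadj
    · exact O.adj_of_dir _ _ h
  not_both := by
    intro a b h
    rw [decide_eq_true_iff] at h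
    rw [decide_eq_false_iff_not]
    intro h2
    rcases h with ⟨ha, hb⟩ | ⟨h, _⟩ <;> rcases h2 with ⟨hb', ha'⟩ | ⟨h2, _⟩
    · exact hadj.ne (ha.symm.trans ha')
    · rw [hb, ha, hxy] at h2; exact Bool.false_ne_true h2
    · rw [ha', hb', hxy] at h; exact Bool.false_ne_true h
    · rw [O.not_both _ _ h2] at h; exact Bool.false_ne_true h

/-- The orientation after the cocycle reversal at the cut given by the reachable set. -/
noncomputable def cocO (O : PartialOrientation G) (q : V)
    (hcut : ∀ a b, G.Adj a b → ¬ Reach O q a → Reach O q b → O.dir a b = true) :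
    PartialOrientation G where
  dir a b := decide
    ((Reach O q a ∧ ¬ Reach O q b ∧ O.dir b a = true) ∨
      ((Reach O q a ↔ Reach O q b) ∧ O.dir a b = true))
  adj_of_dir := by
    intro a b h
    have h' := of_decide_eq_true h
    rcases h' with ⟨_, _, h⟩ | ⟨_, h⟩
    · exact (O.adj_of_dir _ _ h).symm
    · exact O.adj_of_dir _ _ h
  not_both := by
    intro a b h
    have h' := of_decide_eq_true h
    refine decide_eq_false ?_
    rintro (⟨hb, ha, h2⟩ | ⟨hiff, h2⟩)
    · rcases h' with ⟨ha', _, _⟩ | ⟨hiff', _⟩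
      · exact ha ha'
      · exact ha (hiff'.mpr hb)
    · rcases h' with ⟨ha', hb', _⟩ | ⟨_, hd⟩
      · exact hb' (hiff.mpr ha')
      · rw [O.not_both _ _ h2] at hd; exact Bool.false_ne_true hd

lemma cocO_dir_iff (O : PartialOrientation G) (q : V)
    (hcut : ∀ a b, G.Adj a b → ¬ Reach O q a → Reach O q b → O.dir a b = true) (a b : V) :
    (cocO O q hcut).dir a b = true ↔
      ((Reach O q a ∧ ¬ Reach O q b ∧ O.dir b a = true) ∨
        ((Reach O q a ↔ Reach O q b) ∧ O.dir a b = true)) := by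
  exact ⟨fun h => of_decide_eq_true h, fun h => decide_eq_true h⟩

/-- One step: if some vertex is unreachable, a single pivot or cocycle reversal
strictly enlarges the reachable set, preserving the invariant. -/
lemma step (hG : G.Connected) (q : V) (O : PartialOrientation G)
    (hInv : ∀ v, ¬ Reach O q v → ∃ u, O.dir u v = true)
    (hne : ∃ v, ¬ Reach O q v) :
    ∃ O' : PartialOrientation G,
      (EdgePivot O O' ∨ CocycleReversal O O') ∧
      (∀ v, Reach O q v → Reach O' q v) ∧
      (∃ x, ¬ Reach O q x ∧ Reach O' q x) ∧
      (∀ v, ¬ Reach O' q v → ∃ u, O'.dir u v = true) := by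
  classical
  obtain ⟨v0, hv0⟩ := hne
  -- find a boundary edge of the reachable set
  obtain ⟨p⟩ := hG.preconnected q v0
  obtain ⟨d, _, hdfst, hdsnd⟩ :=
    p.exists_boundary_dart {x | Reach O q x} (reach_refl O q) hv0
  by_cases hP : ∃ x y, ¬ Reach O q x ∧ Reach O q y ∧ G.Adj y x ∧
      O.dir y x = false ∧ O.dir x y = false
  · -- pivot case
    obtain ⟨x, y, hx, hy, hadj, hyx, hxy⟩ := hP
    obtain ⟨u0, hu0⟩ := hInv x hx
    set O' := pivotO O x y u0 hadj hyx hxy with hO'def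
    have hdir : ∀ a b, O'.dir a b = true ↔
        ((a = y ∧ b = x) ∨ (O.dir a b = true ∧ ¬(a = u0 ∧ b = x))) := by
      intro a b
      exact ⟨fun h => of_decide_eq_true h, fun h => decide_eq_true h⟩
    have hmono : ∀ v, Reach O q v → Reach O' q v := by
      intro v hv
      induction hv with
      | refl => exact reach_refl _ _
      | tail hab hd ih =>
        refine reach_tail ih ((hdir _ _).mpr (Or.inr ⟨hd, ?_⟩))
        rintro ⟨rfl, rfl⟩
        exact hx (reach_tail hab hd)
    refine ⟨O', Or.inl ⟨x, u0, y, hu0, hadj, hyx, hxy, fun a b => hdir a b⟩,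
      hmono, ⟨x, hx, reach_tail (hmono y hy) ((hdir _ _).mpr (Or.inl ⟨rfl, rfl⟩))⟩, ?_⟩
    -- invariant preserved
    intro v hv
    have hxne : v ≠ x := by
      rintro rfl
      exact hv (reach_tail (hmono y hy) ((hdir _ _).mpr (Or.inl ⟨rfl, rfl⟩)))
    have hvO : ¬ Reach O q v := fun h => hv (hmono v h)
    obtain ⟨u1, hu1⟩ := hInv v hvO
    refine ⟨u1, (hdir _ _).mpr (Or.inr ⟨hu1, ?_⟩)⟩
    rintro ⟨rfl, rfl⟩
    exact hxne rfl
  · -- cocycle case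
    push_neg at hP
    have hcut : ∀ a b, G.Adj a b → ¬ Reach O q a → Reach O q b → O.dir a b = true := by
      intro a b hadj ha hb
      cases hO : O.dir a b with
      | true => rfl
      | false =>
        have hba : O.dir b a = false := by
          cases h2 : O.dir b a with
          | false => rfl
          | true => exact absurd (reach_tail hb h2) ha
        exact absurd hO (hP a b ha hb hadj.symm hba)
    set O' := cocO O q hcut with hO'
    have hmono : ∀ v, Reach O q v → Reach O' q v := by
      intro v hv
      induction hv with
      | refl => exact reach_refl _ _
      | tail hab hd ih =>
        refine reach_tail ih ?_
        rw [cocO_dir_iff]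
        exact Or.inr ⟨by constructor <;> intro _ <;> [exact reach_tail hab hd; exact hab], hd⟩
    refine ⟨O', Or.inr ⟨{x | Reach O q x}, ?_, ?_⟩, hmono, ?_, ?_⟩
    · intro a b hadj ha hb; exact hcut a b hadj ha hb
    · intro a b; rw [cocO_dir_iff]; tauto
    · -- the head of the boundary dart becomes reachable
      refine ⟨d.snd, hdsnd, reach_tail (hmono _ hdfst) ?_⟩
      rw [cocO_dir_iff]
      exact Or.inl ⟨hdfst, hdsnd, hcut d.snd d.fst d.adj.symm hdsnd hdfst⟩
    · -- invariant preserved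
      intro v hv
      have hvO : ¬ Reach O q v := fun h => hv (hmono v h)
      obtain ⟨u1, hu1⟩ := hInv v hvO
      have hu1O : ¬ Reach O q u1 := fun h => hvO (reach_tail h hu1)
      refine ⟨u1, ?_⟩
      rw [cocO_dir_iff]
      exact Or.inr ⟨by constructor <;> intro h <;> [exact absurd h hu1O; exact absurd h hvO], hu1⟩

end Stmt15Aux

/-- A partial orientation which is sourceless, or whose unique
source is `q` (every vertex other than `q` has an incoming edge), is equivalent
in the generalized cocycle reversal system to a `q`-connected partial orientation. -/
theorem stmt15 {V : Type*} [Fintype V] [DecidableEq V] (G : SimpleGraph V)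
    [DecidableRel G.Adj] (hG : G.Connected)
    (q : V) (O : PartialOrientation G)
    (hO : ∀ v, v ≠ q → ∃ u, O.dir u v = true) :
    ∃ O' : PartialOrientation G,
      PartialOrientation.GenCocycleEquiv O O' ∧ O'.QConnected q := by
  classical
  suffices H : ∀ n : ℕ, ∀ O : PartialOrientation G,
      (∀ v, ¬ Stmt15Aux.Reach O q v → ∃ u, O.dir u v = true) →
      (Finset.univ.filter (fun v => ¬ Stmt15Aux.Reach O q v)).card ≤ n →
      ∃ O', PartialOrientation.GenCocycleEquiv O O' ∧ O'.QConnected q by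
    refine H (Fintype.card V) O ?_ ?_
    · intro v hv
      exact hO v (fun h => hv (h ▸ Stmt15Aux.reach_refl O q))
    · exact le_trans (Finset.card_filter_le _ _) (by simp)
  intro n
  induction n with
  | zero =>
    intro O hInv hcard
    refine ⟨O, Relation.ReflTransGen.refl, fun v => ?_⟩
    by_contra hv
    have hmem : v ∈ Finset.univ.filter (fun v => ¬ Stmt15Aux.Reach O q v) := by
      simp only [Finset.mem_filter, Finset.mem_univ, true_and]
      exact hv
    have := Finset.card_pos.mpr ⟨v, hmem⟩
    omega
  | succ n ih =>
    intro O hInv hcard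
    by_cases hall : ∀ v, Stmt15Aux.Reach O q v
    · exact ⟨O, Relation.ReflTransGen.refl, hall⟩
    · push_neg at hall
      obtain ⟨O', hstep, hmono, ⟨x, hx, hx'⟩, hInv'⟩ := Stmt15Aux.step hG q O hInv hall
      have hsub : (Finset.univ.filter (fun v => ¬ Stmt15Aux.Reach O' q v)) ⊆
          (Finset.univ.filter (fun v => ¬ Stmt15Aux.Reach O q v)).erase x := by
        intro v hv
        simp only [Finset.mem_filter, Finset.mem_univ, true_and] at hv
        rw [Finset.mem_erase]
        refine ⟨?_, ?_⟩
        · rintro rfl; exact hv hx'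
        · simp only [Finset.mem_filter, Finset.mem_univ, true_and]
          exact fun h => hv (hmono v h)
      have hxmem : x ∈ Finset.univ.filter (fun v => ¬ Stmt15Aux.Reach O q v) := by
        simp only [Finset.mem_filter, Finset.mem_univ, true_and]
        exact hx
      have hcard' : (Finset.univ.filter (fun v => ¬ Stmt15Aux.Reach O' q v)).card ≤ n := by
        have h1 := Finset.card_le_card hsub
        rw [Finset.card_erase_of_mem hxmem] at h1
        omega
      obtain ⟨O'', h2, hQ⟩ := ih O' hInv' hcard'
      exact ⟨O'', Relation.ReflTransGen.head hstep h2, hQ⟩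
end

section
/- (Riemann–Roch theorem for graphs, Baker–Norine) For every divisor D on a finite connected simple graph G, r(D) − r(K − D) = deg(D) − g + 1, where K is the canonical divisor of G. -/
set_option linter.unusedSectionVars false
set_option linter.unusedVariables false
set_option maxHeartbeats 1000000

namespace BNRR
open Finset

variable {V : Type*} [Fintype V] [DecidableEq V] (G : SimpleGraph V) [DecidableRel G.Adj]

def lap (f : V → ℤ) (v : V) : ℤ := ∑ u ∈ Finset.univ.filter (fun u => G.Adj v u), (f v - f u)

lemma sum_antisym (s : Finset V) (f : V → ℤ) :
    ∑ p ∈ (s ×ˢ s).filter (fun p => G.Adj p.1 p.2), (f p.1 - f p.2) = 0 := by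
  apply Finset.sum_involution (fun p _ => Prod.swap p)
  · intro p hp
    simp [Prod.swap]
  · intro p hp h hswap
    apply h
    have h1 : p.2 = p.1 := congrArg Prod.fst hswap
    simp [Prod.swap, h1]
  · intro p hp
    simp only [mem_filter, mem_product] at hp ⊢
    exact ⟨⟨hp.1.2, hp.1.1⟩, hp.2.symm⟩
  · intro p hp
    simp

lemma sum_lap_eq_cross (s : Finset V) (f : V → ℤ) :
    ∑ w ∈ s, lap G f w
      = ∑ p ∈ (s ×ˢ sᶜ).filter (fun p => G.Adj p.1 p.2), (f p.1 - f p.2) := by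
  have key : ∀ t : Finset V, ∑ p ∈ (s ×ˢ t).filter (fun p => G.Adj p.1 p.2), (f p.1 - f p.2)
      = ∑ w ∈ s, ∑ u ∈ t.filter (fun u => G.Adj w u), (f w - f u) := by
    intro t
    rw [Finset.sum_filter, Finset.sum_product]
    refine Finset.sum_congr rfl fun w _ => ?_
    rw [Finset.sum_filter]
  have hsplit : ∀ w ∈ s, lap G f w
      = ∑ u ∈ s.filter (fun u => G.Adj w u), (f w - f u)
        + ∑ u ∈ sᶜ.filter (fun u => G.Adj w u), (f w - f u) := by
    intro w _
    rw [lap, ← Finset.sum_union]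
    · congr 1
      rw [← Finset.filter_union, Finset.union_compl]
    · exact Finset.disjoint_filter_filter (disjoint_compl_right)
  rw [Finset.sum_congr rfl hsplit, Finset.sum_add_distrib, ← key, ← key,
    sum_antisym, zero_add]

lemma sum_lap_eq_zero (f : V → ℤ) : ∑ v, lap G f v = 0 := by
  have := sum_lap_eq_cross G Finset.univ f
  simpa using this

/-! ### Linear equivalence basics -/

lemma linEquiv_iff (D D' : V → ℤ) : LinEquiv G D D' ↔ ∃ f, ∀ v, D v - D' v = lap G f v :=
  Iff.rfl

lemma lap_neg (f : V → ℤ) (v : V) : lap G (fun u => -f u) v = - lap G f v := by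
  rw [lap, lap, ← Finset.sum_neg_distrib]
  exact Finset.sum_congr rfl fun u _ => by ring

lemma lap_add (f g : V → ℤ) (v : V) :
    lap G (fun u => f u + g u) v = lap G f v + lap G g v := by
  rw [lap, lap, lap, ← Finset.sum_add_distrib]
  exact Finset.sum_congr rfl fun u _ => by ring

lemma linEquiv_refl (D : V → ℤ) : LinEquiv G D D :=
  ⟨0, fun v => by simp [lap]⟩

lemma linEquiv_symm {D D' : V → ℤ} (h : LinEquiv G D D') : LinEquiv G D' D := by
  obtain ⟨f, hf⟩ := h
  refine ⟨fun u => -f u, fun v => ?_⟩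
  have h2 : lap G (fun u => -f u) v = - lap G f v := lap_neg G f v
  rw [lap] at h2
  rw [h2, lap]
  linarith [hf v]

lemma linEquiv_trans {D D' D'' : V → ℤ} (h : LinEquiv G D D') (h' : LinEquiv G D' D'') :
    LinEquiv G D D'' := by
  obtain ⟨f, hf⟩ := h; obtain ⟨g, hg⟩ := h'
  refine ⟨fun u => f u + g u, fun v => ?_⟩
  have h2 : lap G (fun u => f u + g u) v = lap G f v + lap G g v := lap_add G f g v
  rw [lap] at h2
  rw [h2, lap, lap]
  linarith [hf v, hg v]

lemma degDiv_eq_of_linEquiv {D D' : V → ℤ} (h : LinEquiv G D D') : degDiv D = degDiv D' := by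
  obtain ⟨f, hf⟩ := h
  have : ∑ v, (D v - D' v) = ∑ v, lap G f v := Finset.sum_congr rfl fun v _ => hf v
  rw [sum_lap_eq_zero, Finset.sum_sub_distrib] at this
  have : degDiv D - degDiv D' = 0 := this
  omega

lemma linEquiv_sub_right {D D' : V → ℤ} (E : V → ℤ) (h : LinEquiv G D D') :
    LinEquiv G (fun v => D v - E v) (fun v => D' v - E v) := by
  obtain ⟨f, hf⟩ := h
  exact ⟨f, fun v => by simp only; linarith [hf v]⟩

lemma linEquiv_add_right {D D' : V → ℤ} (E : V → ℤ) (h : LinEquiv G D D') :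
    LinEquiv G (fun v => D v + E v) (fun v => D' v + E v) := by
  obtain ⟨f, hf⟩ := h
  exact ⟨f, fun v => by simp only; linarith [hf v]⟩

lemma linEquiv_sub_left {D D' : V → ℤ} (X : V → ℤ) (h : LinEquiv G D D') :
    LinEquiv G (fun v => X v - D v) (fun v => X v - D' v) := by
  obtain ⟨g, hg⟩ := linEquiv_symm G h
  exact ⟨g, fun v => by simp only; linarith [hg v]⟩

lemma degDiv_nonneg {E : V → ℤ} (h : EffectiveDiv E) : 0 ≤ degDiv E :=
  Finset.sum_nonneg fun v _ => h v

lemma degPlus_nonneg (D : V → ℤ) : 0 ≤ degPlus D :=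
  Finset.sum_nonneg fun v _ => le_max_right _ _


/-- The divisor associated to an injective labelling `ι`. -/
def nu (ι : V → ℤ) (v : V) : ℤ :=
  ((Finset.univ.filter (fun u => G.Adj u v ∧ ι u < ι v)).card : ℤ) - 1

lemma sum_nu_card (ι : V → ℤ) (hι : Function.Injective ι) :
    ∑ v, ((Finset.univ.filter (fun u => G.Adj u v ∧ ι u < ι v)).card : ℤ)
      = (G.edgeFinset.card : ℤ) := by
  have h1 : ∑ v, (Finset.univ.filter (fun u => G.Adj u v ∧ ι u < ι v)).card
      = ((Finset.univ ×ˢ Finset.univ).filter (fun p : V × V => G.Adj p.1 p.2 ∧ ι p.1 < ι p.2)).card := by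
    rw [Finset.card_eq_sum_card_fiberwise
      (f := fun p : V × V => p.2) (t := Finset.univ) (fun x _ => Finset.mem_univ _)]
    refine Finset.sum_congr rfl fun v _ => ?_
    refine Finset.card_nbij (fun u => (u, v)) ?_ ?_ ?_
    · intro u hu
      simp only [Finset.mem_filter, Finset.mem_product, Finset.mem_univ, true_and,
        and_true] at hu ⊢
      simpa using hu
    · intro a _ b _ hab
      exact congrArg Prod.fst hab
    · intro p hp
      simp only [Finset.coe_filter, Set.mem_setOf_eq, Finset.mem_coe, Finset.mem_filter,
        Finset.mem_product, Finset.mem_univ, true_and] at hp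
      refine ⟨p.1, ?_, ?_⟩
      · simp only [Finset.coe_filter, Set.mem_setOf_eq, Finset.mem_univ, true_and]
        rw [← hp.2]
        exact hp.1
      · exact Prod.ext rfl hp.2.symm
  have h2 : ((Finset.univ ×ˢ Finset.univ).filter (fun p : V × V => G.Adj p.1 p.2 ∧ ι p.1 < ι p.2)).card
      = G.edgeFinset.card := by
    refine Finset.card_nbij (fun p : V × V => s(p.1, p.2)) ?_ ?_ ?_
    · intro p hp
      simp only [Finset.mem_coe, Finset.mem_filter] at hp
      simpa [SimpleGraph.mem_edgeFinset] using hp.2.1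
    · intro a ha b hb hab
      simp only [Finset.coe_filter, Set.mem_setOf_eq] at ha hb
      rcases Sym2.eq_iff.mp hab with ⟨h1, h2⟩ | ⟨h1, h2⟩
      · exact Prod.ext h1 h2
      · exfalso
        rw [← h1, ← h2] at hb
        exact absurd (ha.2.2.trans hb.2.2) (lt_irrefl _)
    · intro e he
      simp only [Finset.mem_coe, SimpleGraph.mem_edgeFinset] at he
      induction e with
      | _ a b =>
        rw [SimpleGraph.mem_edgeSet] at he
        rcases lt_or_gt_of_ne (fun h : ι a = ι b => he.ne (hι h)) with hlt | hgt
        · exact ⟨(a, b), by simp [he, hlt], rfl⟩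
        · refine ⟨(b, a), by simp [he.symm, hgt], Sym2.eq_swap⟩
  rw [← h2, ← h1]
  push_cast
  rfl

lemma degDiv_nu (ι : V → ℤ) (hι : Function.Injective ι) :
    degDiv (nu G ι) = (G.edgeFinset.card : ℤ) - (Fintype.card V : ℤ) := by
  unfold degDiv nu
  rw [Finset.sum_sub_distrib, sum_nu_card G ι hι]
  simp [Finset.card_univ]

lemma nu_neg (ι : V → ℤ) (hι : Function.Injective ι) (v : V) :
    nu G (fun u => -ι u) v = canonicalDiv G v - nu G ι v := by
  unfold nu canonicalDiv
  have hdeg : (Finset.univ.filter (fun u => G.Adj u v ∧ ι u < ι v)).card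
      + (Finset.univ.filter (fun u => G.Adj u v ∧ ι v < ι u)).card = G.degree v := by
    rw [← Finset.card_union_of_disjoint]
    · have : (Finset.univ.filter (fun u => G.Adj u v ∧ ι u < ι v))
          ∪ (Finset.univ.filter (fun u => G.Adj u v ∧ ι v < ι u))
          = Finset.univ.filter (fun u => G.Adj v u) := by
        ext u
        simp only [Finset.mem_union, Finset.mem_filter, Finset.mem_univ, true_and]
        constructor
        · rintro (⟨h, _⟩ | ⟨h, _⟩) <;> exact h.symm
        · intro h
          have hne : ι u ≠ ι v := fun he => h.ne' (hι he)
          rcases hne.lt_or_gt with h1 | h1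
          · exact Or.inl ⟨h.symm, h1⟩
          · exact Or.inr ⟨h.symm, h1⟩
      rw [this, ← SimpleGraph.neighborFinset_eq_filter, SimpleGraph.card_neighborFinset_eq_degree]
    · rw [Finset.disjoint_filter]
      rintro u _ ⟨_, h1⟩ ⟨_, h2⟩
      exact absurd (h1.trans h2) (lt_irrefl _)
  have hcong : (Finset.univ.filter (fun u => G.Adj u v ∧ -ι u < -ι v))
      = (Finset.univ.filter (fun u => G.Adj u v ∧ ι v < ι u)) := by
    refine Finset.filter_congr fun u _ => ?_
    simp [neg_lt_neg_iff]
  rw [hcong]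
  omega

/-- ν is not linearly equivalent to any effective divisor. -/
lemma nu_not_equiv_effective [Nonempty V] (ι : V → ℤ) (hι : Function.Injective ι)
    (E : V → ℤ) (hE : EffectiveDiv E) : ¬ LinEquiv G (nu G ι) E := by
  rintro ⟨f, hf⟩
  -- pick the ι-least vertex among those maximizing f
  obtain ⟨vM, _, hMmax⟩ := Finset.exists_max_image Finset.univ f Finset.univ_nonempty
  set M := f vM with hM
  set A : Finset V := Finset.univ.filter (fun v => f v = M) with hA
  have hAne : A.Nonempty := ⟨vM, by simp [hA, hM]⟩
  obtain ⟨v, hvA, hvmin⟩ := Finset.exists_min_image A ι hAne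
  have hfv : f v = M := (Finset.mem_filter.mp hvA).2
  have hbound : ((Finset.univ.filter (fun u => G.Adj u v ∧ ι u < ι v)).card : ℤ)
      ≤ ∑ u ∈ Finset.univ.filter (fun u => G.Adj v u), (f v - f u) := by
    have : ((Finset.univ.filter (fun u => G.Adj u v ∧ ι u < ι v)).card : ℤ)
        = ∑ u ∈ Finset.univ.filter (fun u => G.Adj v u), (if ι u < ι v then (1:ℤ) else 0) := by
      rw [Finset.sum_ite, Finset.sum_const, Finset.sum_const]
      simp only [nsmul_eq_mul, mul_one, mul_zero, add_zero]
      congr 1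
      rw [Finset.filter_filter]
      congr 1
      ext u
      simp only [Finset.mem_filter, Finset.mem_univ, true_and]
      exact ⟨fun ⟨h1, h2⟩ => ⟨h1.symm, h2⟩, fun ⟨h1, h2⟩ => ⟨h1.symm, h2⟩⟩
    rw [this]
    refine Finset.sum_le_sum fun u hu => ?_
    have hum : f u ≤ M := hMmax u (Finset.mem_univ u)
    have hfvM : f v = M := hfv
    by_cases h : ι u < ι v
    · simp only [if_pos h]
      have huA : u ∉ A := by
        intro huA
        exact absurd (hvmin u huA) (not_le.mpr h)
      have : f u ≠ M := fun he => huA (by simp [hA, he])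
      omega
    · simp only [if_neg h]
      omega
  have := hf v
  rw [nu] at this
  have hEv := hE v
  omega


lemma lap_sub_const (f : V → ℤ) (c : ℤ) (v : V) :
    lap G (fun u => f u - c) v = lap G f v := by
  unfold lap
  exact Finset.sum_congr rfl fun u _ => by ring

lemma exists_closer (hG : G.Connected) {q v : V} (hv : v ≠ q) :
    ∃ u, G.Adj u v ∧ G.dist q u + 1 = G.dist q v := by
  obtain ⟨p, hp⟩ := hG.exists_walk_length_eq_dist q v
  have hpos : 0 < G.dist q v := hG.pos_dist_of_ne (Ne.symm hv)
  cases hrev : p.reverse with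
  | nil => exact absurd rfl hv
  | cons e t =>
    rename_i u'
    refine ⟨u', e.symm, ?_⟩
    have hlen : p.reverse.length = t.length + 1 := by rw [hrev]; simp
    rw [SimpleGraph.Walk.length_reverse] at hlen
    have h1 : G.dist q u' ≤ t.length := by
      have := SimpleGraph.dist_le t.reverse
      simpa using this
    have h2 : G.dist q v ≤ G.dist q u' + 1 := by
      have htri := hG.dist_triangle (u := q) (v := u') (w := v)
      have : G.dist u' v = 1 := SimpleGraph.dist_eq_one_iff_adj.mpr e.symm
      omega
    omega

lemma dist_lt_card (hG : G.Connected) (q v : V) : G.dist q v < Fintype.card V := by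
  obtain ⟨p, hpath, hlen⟩ := hG.exists_path_of_dist q v
  rw [← hlen]
  exact hpath.length_lt

/-- Initial firing making `D` effective away from `q`. -/
lemma exists_initial_firing (hG : G.Connected) (D : V → ℤ) (q : V) :
    ∃ f : V → ℤ, f q = 0 ∧ ∀ v, v ≠ q → 0 ≤ D v - lap G f v := by
  classical
  have : Nonempty V := hG.nonempty
  set n := Fintype.card V with hn
  have hn1 : 1 ≤ n := Fintype.card_pos
  set C : ℤ := ∑ v, max (-D v) 0 with hC
  have hC0 : 0 ≤ C := Finset.sum_nonneg fun v _ => le_max_right _ _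
  have hCD : ∀ v, -D v ≤ C := by
    intro v
    calc -D v ≤ max (-D v) 0 := le_max_left _ _
    _ ≤ C := Finset.single_le_sum (f := fun v => max (-D v) 0)
        (fun u _ => le_max_right _ _) (Finset.mem_univ v)
  set g : V → ℤ := fun v => C * ((n + 1) ^ (n - G.dist q v) : ℕ) with hg
  refine ⟨fun v => g v - g q, by simp, fun v hv => ?_⟩
  rw [lap_sub_const]
  -- suffices: lap g v ≤ -C
  have hkey : lap G g v ≤ -C := by
    set d := G.dist q v with hd
    have hd1 : 1 ≤ d := hG.pos_dist_of_ne (Ne.symm hv)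
    have hdn : d ≤ n - 1 := by
      have := dist_lt_card G hG q v
      omega
    obtain ⟨u₀, hu₀adj, hu₀d⟩ := exists_closer G hG hv
    set P : ℤ := (((n + 1) ^ (n - d - 1) : ℕ) : ℤ) with hP
    have hP1 : 1 ≤ P := by rw [hP]; exact_mod_cast Nat.one_le_pow _ _ (by omega)
    -- the value of g at distance-(d-1), d, d+1 vertices
    have hgv : g v = C * ((n + 1) * P) := by
      rw [hg]
      simp only
      rw [← hd]
      have h1 : n - d = (n - d - 1) + 1 := by omega
      rw [h1, hP]
      push_cast [pow_succ]
      ring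
    have hgu₀ : g u₀ = C * ((n + 1) * ((n + 1) * P)) := by
      rw [hg]
      simp only
      have hdu₀ : G.dist q u₀ = d - 1 := by omega
      rw [hdu₀]
      have h1 : n - (d - 1) = (n - d - 1) + 2 := by omega
      rw [h1, hP]
      push_cast [pow_succ]
      ring
    -- each neighbor u has g u ≥ C * P
    have hgub : ∀ u, G.Adj v u → C * P ≤ g u := by
      intro u hu
      have htri : G.dist q u ≤ d + 1 := by
        have htri := hG.dist_triangle (u := q) (v := v) (w := u)
        have : G.dist v u = 1 := SimpleGraph.dist_eq_one_iff_adj.mpr hu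
        omega
      rw [hg]
      simp only
      have hle : (n - d - 1) ≤ n - G.dist q u := by omega
      have : ((n+1)^(n - d - 1) : ℤ) ≤ ((n+1)^(n - G.dist q u) : ℤ) := by
        have := pow_le_pow_right₀ (a := ((n:ℤ)+1)) (by omega) hle
        push_cast
        push_cast at this
        exact this
      rw [hP]
      have := mul_le_mul_of_nonneg_left this hC0
      push_cast at this ⊢
      exact this
    -- split off u₀
    have hu₀mem : u₀ ∈ Finset.univ.filter (fun u => G.Adj v u) := by
      simp [hu₀adj.symm]
    rw [lap]
    rw [← Finset.add_sum_erase _ _ hu₀mem]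
    have hterm₀ : g v - g u₀ = - (C * (n+1) * P * n) := by
      rw [hgv, hgu₀]
      push_cast
      ring
    have hrest : ∑ u ∈ (Finset.univ.filter (fun u => G.Adj v u)).erase u₀, (g v - g u)
        ≤ (n - 1) * (C * n * P) := by
      have hbound : ∀ u ∈ (Finset.univ.filter (fun u => G.Adj v u)).erase u₀,
          g v - g u ≤ C * n * P := by
        intro u hu
        have hadj : G.Adj v u := (Finset.mem_filter.mp (Finset.mem_of_mem_erase hu)).2
        have := hgub u hadj
        rw [hgv]
        push_cast
        nlinarith [hC0, hP1]
      calc ∑ u ∈ (Finset.univ.filter (fun u => G.Adj v u)).erase u₀, (g v - g u)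
          ≤ ∑ u ∈ (Finset.univ.filter (fun u => G.Adj v u)).erase u₀, (C * n * P) :=
            Finset.sum_le_sum hbound
        _ = ((Finset.univ.filter (fun u => G.Adj v u)).erase u₀).card * (C * n * P) := by
            rw [Finset.sum_const]; ring
        _ ≤ (n - 1) * (C * n * P) := by
            have hcard : ((Finset.univ.filter (fun u => G.Adj v u)).erase u₀).card ≤ n - 1 := by
              have h1 : ((Finset.univ.filter (fun u => G.Adj v u)).erase u₀).card
                  ≤ (Finset.univ.erase u₀).card :=
                Finset.card_le_card (Finset.erase_subset_erase _ (Finset.filter_subset _ _))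
              rw [Finset.card_erase_of_mem (Finset.mem_univ _)] at h1
              simpa using h1
            have hpos : 0 ≤ C * n * P := by positivity
            have : (((Finset.univ.filter (fun u => G.Adj v u)).erase u₀).card : ℤ) ≤ (n : ℤ) - 1 := by
              push_cast
              omega
            nlinarith
    have hnP : 1 ≤ (n : ℤ) * P := by nlinarith
    calc g v - g u₀ + ∑ u ∈ (Finset.univ.filter (fun u => G.Adj v u)).erase u₀, (g v - g u)
        ≤ - (C * (n+1) * P * n) + (n - 1) * (C * n * P) := by
          rw [hterm₀]; exact add_le_add_right hrest _
      _ = -2 * C * (n * P) := by ring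
      _ ≤ -C := by nlinarith
  have := hCD v
  omega


lemma firing_bounded (hG : G.Connected) (D : V → ℤ) (q : V) (f : V → ℤ)
    (hfq : f q = 0) (hf : ∀ v, v ≠ q → 0 ≤ D v - lap G f v) (v : V) :
    f v ≤ (Fintype.card V : ℤ) * degPlus D := by
  classical
  have : Nonempty V := hG.nonempty
  set n := Fintype.card V with hn
  have hn1 : 1 ≤ n := Fintype.card_pos
  set C : ℤ := degPlus D with hC
  have hC0 : 0 ≤ C := Finset.sum_nonneg fun w _ => le_max_right _ _
  obtain ⟨x, _, hmax⟩ := Finset.exists_max_image Finset.univ f Finset.univ_nonempty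
  have hvx : f v ≤ f x := hmax v (Finset.mem_univ v)
  by_cases hM : f x ≤ 0
  · have : (0:ℤ) ≤ (n:ℤ) * C := by positivity
    omega
  push_neg at hM
  suffices hfx : f x ≤ (n:ℤ) * C by omega
  have hxq : x ≠ q := fun h => by rw [h, hfq] at hM; omega
  obtain ⟨p, hpath, hplen⟩ := hG.exists_path_of_dist x q
  have hL : p.length < n := hpath.length_lt
  set L := p.length with hLdef
  set a : ℕ → ℤ := fun i => f (p.getVert i) with ha
  have ha0 : a 0 = f x := by rw [ha]; simp
  have haL : a L = 0 := by rw [ha, hLdef]; simp [SimpleGraph.Walk.getVert_length, hfq]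
  -- least index with a j ≤ 0
  have hex : ∃ j, a j ≤ 0 := ⟨L, by omega⟩
  set j₀ := Nat.find hex with hj₀
  have hj₀spec : a j₀ ≤ 0 := Nat.find_spec hex
  have hj₀min : ∀ j < j₀, 1 ≤ a j := by
    intro j hj
    have := Nat.find_min hex hj
    omega
  have hj₀L : j₀ ≤ L := Nat.find_le (by omega)
  have hj₀pos : 1 ≤ j₀ := by
    rcases Nat.eq_zero_or_pos j₀ with h | h
    · rw [h] at hj₀spec; omega
    · exact h
  -- find a big drop
  have hdrop : ∃ j < j₀, f x ≤ (n:ℤ) * (a j - a (j+1)) := by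
    by_contra hcon
    push_neg at hcon
    have hterm : ∀ j ∈ Finset.range j₀, (n:ℤ) * (a j - a (j+1)) ≤ f x - 1 := by
      intro j hj
      have := hcon j (Finset.mem_range.mp hj)
      omega
    have htel : ∑ j ∈ Finset.range j₀, (a j - a (j+1)) = a 0 - a j₀ :=
      Finset.sum_range_sub' a j₀
    have hsum : (n:ℤ) * (a 0 - a j₀) ≤ j₀ * (f x - 1) := by
      calc (n:ℤ) * (a 0 - a j₀) = ∑ j ∈ Finset.range j₀, (n:ℤ) * (a j - a (j+1)) := by
            rw [← Finset.mul_sum, htel]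
        _ ≤ ∑ j ∈ Finset.range j₀, (f x - 1) := Finset.sum_le_sum hterm
        _ = j₀ * (f x - 1) := by rw [Finset.sum_const, Finset.card_range]; ring
    have h1 : f x ≤ a 0 - a j₀ := by omega
    have h2 : (j₀ : ℤ) ≤ (n : ℤ) := by exact_mod_cast (by omega : j₀ ≤ n)
    nlinarith
  obtain ⟨j, hjlt, hjdrop⟩ := hdrop
  set v₁ := p.getVert j with hv₁
  set u₁ := p.getVert (j+1) with hu₁
  have hadj : G.Adj v₁ u₁ := p.adj_getVert_succ (by omega)
  have hav : a j = f v₁ := rfl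
  have hau : a (j+1) = f u₁ := rfl
  have hdrop1 : a (j+1) + 1 ≤ a j := by nlinarith [hj₀min j hjlt]
  set t : ℤ := max (a (j+1) + 1) 1 with ht
  set S : Finset V := Finset.univ.filter (fun w => t ≤ f w) with hS
  have hv₁S : v₁ ∈ S := by
    rw [hS]
    simp only [Finset.mem_filter, Finset.mem_univ, true_and]
    have := hj₀min j hjlt
    rw [← hav]
    omega
  have hqS : q ∉ S := by
    rw [hS]
    simp only [Finset.mem_filter, Finset.mem_univ, true_and, not_le, hfq]
    omega
  have hu₁S : u₁ ∉ S := by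
    rw [hS]
    simp only [Finset.mem_filter, Finset.mem_univ, true_and, not_le]
    rw [← hau]
    omega
  have hsum0 : 0 ≤ ∑ w ∈ S, (D w - lap G f w) := by
    refine Finset.sum_nonneg fun w hw => ?_
    exact hf w (fun h => hqS (h ▸ hw))
  have hDC : ∑ w ∈ S, D w ≤ C := by
    calc ∑ w ∈ S, D w ≤ ∑ w ∈ S, max (D w) 0 := Finset.sum_le_sum fun w _ => le_max_left _ _
      _ ≤ ∑ w, max (D w) 0 := Finset.sum_le_sum_of_subset_of_nonneg (Finset.subset_univ _)
          (fun w _ _ => le_max_right _ _)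
      _ = C := rfl
  have hlapC : ∑ w ∈ S, lap G f w ≤ C := by
    rw [Finset.sum_sub_distrib] at hsum0
    omega
  have hcross : f v₁ - f u₁ ≤ ∑ w ∈ S, lap G f w := by
    rw [sum_lap_eq_cross]
    refine Finset.single_le_sum (f := fun p : V × V => f p.1 - f p.2) (a := (v₁, u₁)) ?_ ?_
    · rintro ⟨w, u⟩ hp
      simp only [Finset.mem_filter, Finset.mem_product, Finset.mem_compl] at hp
      obtain ⟨⟨hw, hu⟩, _⟩ := hp
      rw [hS] at hw hu
      simp only [Finset.mem_filter, Finset.mem_univ, true_and, not_le] at hw hu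
      simp only
      omega
    · simp only [Finset.mem_filter, Finset.mem_product, Finset.mem_compl]
      exact ⟨⟨hv₁S, hu₁S⟩, hadj⟩
  have hfinal : f v₁ - f u₁ ≤ C := le_trans hcross hlapC
  have : f x ≤ (n:ℤ) * (f v₁ - f u₁) := by rw [← hav, ← hau]; exact hjdrop
  calc f x ≤ (n:ℤ) * (f v₁ - f u₁) := this
    _ ≤ (n:ℤ) * C := by
        have : (0:ℤ) ≤ (n:ℤ) := by positivity
        nlinarith


/-- There is a pointwise-maximal valid firing vector. -/
lemma exists_max_firing (hG : G.Connected) (D : V → ℤ) (q : V) :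
    ∃ F : V → ℤ, (F q = 0 ∧ ∀ v, v ≠ q → 0 ≤ D v - lap G F v) ∧
      ∀ g : V → ℤ, (g q = 0 ∧ ∀ v, v ≠ q → 0 ≤ D v - lap G g v) → ∀ v, g v ≤ F v := by
  classical
  set T : (V → ℤ) → Prop := fun f => f q = 0 ∧ ∀ v, v ≠ q → 0 ≤ D v - lap G f v with hT
  obtain ⟨f₀, hf₀⟩ := exists_initial_firing G hG D q
  have hTmax : ∀ f g, T f → T g → T (fun v => max (f v) (g v)) := by
    intro f g hf hg
    constructor
    · simp [hf.1, hg.1]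
    · intro v hv
      rcases le_total (f v) (g v) with h | h
      · have hmv : max (f v) (g v) = g v := max_eq_right h
        have hle : lap G (fun u => max (f u) (g u)) v ≤ lap G g v := by
          refine Finset.sum_le_sum fun u _ => ?_
          have := le_max_right (f u) (g u)
          simp only [hmv]
          omega
        have := hg.2 v hv
        omega
      · have hmv : max (f v) (g v) = f v := max_eq_left h
        have hle : lap G (fun u => max (f u) (g u)) v ≤ lap G f v := by
          refine Finset.sum_le_sum fun u _ => ?_
          have := le_max_left (f u) (g u)
          simp only [hmv]
          omega
        have := hf.2 v hv
        omega
  -- greatest value at each vertex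
  have hvals : ∀ v : V, ∃ z : ℤ, (∃ f, T f ∧ f v = z) ∧ ∀ z', (∃ f, T f ∧ f v = z') → z' ≤ z := by
    intro v
    have hbdd : ∃ b : ℤ, ∀ z : ℤ, (∃ f, T f ∧ f v = z) → z ≤ b := by
      refine ⟨(Fintype.card V : ℤ) * degPlus D, ?_⟩
      rintro z ⟨f, hf, rfl⟩
      exact firing_bounded G hG D q f hf.1 hf.2 v
    have hinh : ∃ z : ℤ, ∃ f, T f ∧ f v = z := ⟨f₀ v, f₀, hf₀, rfl⟩
    obtain ⟨lub, h1, h2⟩ := Int.exists_greatest_of_bdd hbdd hinh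
    exact ⟨lub, h1, h2⟩
  choose gmax hgmax hgub using hvals
  choose fv hfvT hfveq using hgmax
  -- pointwise max over all fv
  have hFs : ∀ s : Finset V, ∃ F, T F ∧ ∀ w ∈ s, ∀ v', fv w v' ≤ F v' := by
    intro s
    induction s using Finset.induction with
    | empty => exact ⟨f₀, hf₀, by simp⟩
    | insert w s' hw ih =>
      obtain ⟨F, hF, hFb⟩ := ih
      refine ⟨fun v => max (fv w v) (F v), hTmax _ _ (hfvT w) hF, ?_⟩
      intro w' hw' v'
      rcases Finset.mem_insert.mp hw' with h | h
      · rw [h]; exact le_max_left _ _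
      · exact le_trans (hFb w' h v') (le_max_right _ _)
  obtain ⟨F, hFT, hFb⟩ := hFs Finset.univ
  refine ⟨F, hFT, ?_⟩
  intro g hg v
  have h1 : g v ≤ gmax v := hgub v (g v) ⟨g, hg, rfl⟩
  have h2 : gmax v ≤ F v := by
    rw [← hfveq v]
    exact hFb v (Finset.mem_univ v) v
  omega

/-- No subset of `V \ {q}` can be fired from the maximal divisor. -/
lemma max_firing_reduced (hG : G.Connected) (D : V → ℤ) (q : V)
    (F : V → ℤ) (hFT : F q = 0 ∧ ∀ v, v ≠ q → 0 ≤ D v - lap G F v)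
    (hFmax : ∀ g : V → ℤ, (g q = 0 ∧ ∀ v, v ≠ q → 0 ≤ D v - lap G g v) → ∀ v, g v ≤ F v)
    (A : Finset V) (hA : A.Nonempty) (hqA : q ∉ A) :
    ∃ v ∈ A, D v - lap G F v < ((Finset.univ.filter (fun u => G.Adj v u ∧ u ∉ A)).card : ℤ) := by
  classical
  by_contra hcon
  push_neg at hcon
  set χ : V → ℤ := fun v => if v ∈ A then 1 else 0 with hχ
  set F' : V → ℤ := fun v => F v + χ v with hF'
  have hlapχin : ∀ v ∈ A, lap G χ v = ((Finset.univ.filter (fun u => G.Adj v u ∧ u ∉ A)).card : ℤ) := by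
    intro v hv
    rw [lap]
    have : ∀ u ∈ Finset.univ.filter (fun u => G.Adj v u), χ v - χ u = if u ∉ A then 1 else 0 := by
      intro u hu
      rw [hχ]
      simp only [if_pos hv]
      by_cases h : u ∈ A <;> simp [h]
    rw [Finset.sum_congr rfl this, Finset.sum_ite, Finset.sum_const, Finset.sum_const]
    simp only [nsmul_eq_mul, mul_one, mul_zero, add_zero, Finset.filter_filter]
  have hlapχout : ∀ v, v ∉ A → lap G χ v ≤ 0 := by
    intro v hv
    rw [lap]
    refine Finset.sum_nonpos fun u _ => ?_
    rw [hχ]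
    simp only [if_neg hv]
    by_cases h : u ∈ A <;> simp [h]
  have hT' : F' q = 0 ∧ ∀ v, v ≠ q → 0 ≤ D v - lap G F' v := by
    constructor
    · rw [hF', hχ]
      simp [hFT.1, hqA]
    · intro v hv
      have hlap : lap G F' v = lap G F v + lap G χ v := lap_add G F χ v
      by_cases h : v ∈ A
      · have := hcon v h
        rw [hlap, hlapχin v h]
        omega
      · have := hFT.2 v hv
        have := hlapχout v h
        rw [hlap]
        omega
  obtain ⟨v, hv⟩ := hA
  have := hFmax F' hT' v
  rw [hF', hχ] at this
  simp only [if_pos hv] at this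
  omega


lemma indexOf_lt_iff_mem_take {α : Type*} [DecidableEq α] :
    ∀ (l : List α) (u : α), u ∈ l → ∀ k, (l.idxOf u < k ↔ u ∈ l.take k) := by
  intro l
  induction l with
  | nil => intro u hu; cases hu
  | cons a t ih =>
    intro u hu k
    cases k with
    | zero => simp
    | succ k =>
      by_cases h : u = a
      · subst h
        simp [List.idxOf_cons_self]
      · rw [List.idxOf_cons_ne _ (Ne.symm h)]
        rw [List.take_succ_cons]
        simp only [List.mem_cons, h, false_or]
        rw [← ih u (by rcases List.mem_cons.mp hu with h' | h'; exact absurd h' h; exact h') k]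
        omega

lemma burning (D : V → ℤ) (q : V)
    (hred : ∀ A : Finset V, A.Nonempty → q ∉ A →
      ∃ v ∈ A, D v < ((Finset.univ.filter (fun u => G.Adj v u ∧ u ∉ A)).card : ℤ)) :
    ∀ m : ℕ, ∀ A : Finset V, q ∉ A → A.card = m →
      ∃ l : List V, l.Nodup ∧ (∀ v, v ∈ l ↔ v ∈ A) ∧
        ∀ i (hi : i < l.length),
          D (l[i]'hi) <
            ((Finset.univ.filter (fun u => G.Adj (l[i]'hi) u ∧ (u ∉ A ∨ u ∈ l.take i))).card : ℤ) := by
  intro m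
  induction m with
  | zero =>
    intro A hqA hcard
    rw [Finset.card_eq_zero] at hcard
    subst hcard
    exact ⟨[], List.nodup_nil, fun v => by simp, fun i hi => by simp at hi⟩
  | succ m ih =>
    intro A hqA hcard
    have hAne : A.Nonempty := Finset.card_pos.mp (by omega)
    obtain ⟨v₀, hv₀A, hv₀⟩ := hred A hAne hqA
    obtain ⟨l', hnd, hmem, hprop⟩ := ih (A.erase v₀) (fun h => hqA (Finset.mem_of_mem_erase h))
      (by rw [Finset.card_erase_of_mem hv₀A, hcard]; omega)
    refine ⟨v₀ :: l', ?_, ?_, ?_⟩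
    · refine List.nodup_cons.mpr ⟨?_, hnd⟩
      intro h
      exact absurd ((hmem v₀).mp h) (Finset.notMem_erase v₀ A)
    · intro v
      rw [List.mem_cons, hmem v, Finset.mem_erase]
      constructor
      · rintro (rfl | ⟨_, h⟩)
        · exact hv₀A
        · exact h
      · intro h
        by_cases hv : v = v₀
        · exact Or.inl hv
        · exact Or.inr ⟨hv, h⟩
    · intro i hi
      cases i with
      | zero =>
        simp only [List.getElem_cons_zero, List.take_zero]
        refine lt_of_lt_of_le hv₀ ?_
        have : (Finset.univ.filter (fun u => G.Adj v₀ u ∧ u ∉ A))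
            = (Finset.univ.filter (fun u => G.Adj v₀ u ∧ (u ∉ A ∨ u ∈ ([] : List V)))) := by
          refine Finset.filter_congr fun u _ => by simp
        rw [this]
        convert le_rfl
        exact Finset.filter_congr fun _ _ => Iff.rfl
      | succ i =>
        simp only [List.getElem_cons_succ, List.take_succ_cons]
        have hi' : i < l'.length := by simpa using hi
        refine lt_of_lt_of_le (hprop i hi') (le_of_eq ?_)
        have hfil : (Finset.univ.filter (fun u => G.Adj (l'[i]'hi') u ∧ (u ∉ A.erase v₀ ∨ u ∈ l'.take i)))
            = (Finset.univ.filter (fun u => G.Adj (l'[i]'hi') u ∧ (u ∉ A ∨ u ∈ v₀ :: l'.take i))) := by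
          refine Finset.filter_congr fun u _ => ?_
          simp only [Finset.mem_erase, List.mem_cons, eq_iff_iff]
          constructor
          · rintro ⟨ha, hb⟩
            refine ⟨ha, ?_⟩
            rcases hb with h | h
            · by_cases hu : u = v₀
              · exact Or.inr (Or.inl hu)
              · exact Or.inl (fun hc => h ⟨hu, hc⟩)
            · exact Or.inr (Or.inr h)
          · rintro ⟨ha, hb⟩
            refine ⟨ha, ?_⟩
            rcases hb with h | h | h
            · exact Or.inl (fun hc => h hc.2)
            · exact Or.inl (fun hc => hc.1 h)
            · exact Or.inr h
        rw [hfil]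
        convert rfl
        exact Finset.filter_congr fun _ _ => Iff.rfl

/-- Main lemma: a divisor not equivalent to effective is dominated by some `nu`. -/
lemma exists_nu_dominator (hG : G.Connected) (D : V → ℤ)
    (h : ¬ ∃ E', EffectiveDiv E' ∧ LinEquiv G D E') :
    ∃ ι : V → ℤ, Function.Injective ι ∧ ∃ D₂ : V → ℤ, LinEquiv G D D₂ ∧ ∀ v, D₂ v ≤ nu G ι v := by
  classical
  have : Nonempty V := hG.nonempty
  set q : V := Classical.arbitrary V with hq
  obtain ⟨F, hFT, hFmax⟩ := exists_max_firing G hG D q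
  set D₂ : V → ℤ := fun v => D v - lap G F v with hD₂
  have hlin : LinEquiv G D D₂ := ⟨F, fun v => by rw [hD₂]; simp [lap]⟩
  have hD₂nonneg : ∀ v, v ≠ q → 0 ≤ D₂ v := hFT.2
  have hD₂q : D₂ q < 0 := by
    by_contra hc
    push_neg at hc
    refine h ⟨D₂, fun v => ?_, hlin⟩
    by_cases hv : v = q
    · rw [hv]; exact hc
    · exact hD₂nonneg v hv
  have hred : ∀ A : Finset V, A.Nonempty → q ∉ A →
      ∃ v ∈ A, D₂ v < ((Finset.univ.filter (fun u => G.Adj v u ∧ u ∉ A)).card : ℤ) :=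
    fun A hA hqA => max_firing_reduced G hG D q F hFT hFmax A hA hqA
  obtain ⟨l, hnd, hmem, hprop⟩ := burning G D₂ q hred (Finset.univ.erase q).card
    (Finset.univ.erase q) (Finset.notMem_erase q _) rfl
  set L : List V := q :: l with hL
  have hmemL : ∀ v : V, v ∈ L := by
    intro v
    rw [hL, List.mem_cons]
    by_cases hv : v = q
    · exact Or.inl hv
    · exact Or.inr ((hmem v).mpr (Finset.mem_erase.mpr ⟨hv, Finset.mem_univ v⟩))
  have hndL : L.Nodup := by
    rw [hL, List.nodup_cons]
    exact ⟨fun hc => by simpa using ((hmem q).mp hc), hnd⟩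
  set ι : V → ℤ := fun v => (L.idxOf v : ℤ) with hι
  have hinj : Function.Injective ι := by
    intro a b hab
    simp only [hι] at hab
    have h2 : L.idxOf a = L.idxOf b := by exact_mod_cast hab
    exact (List.idxOf_inj (hmemL a)).mp h2
  refine ⟨ι, hinj, D₂, hlin, ?_⟩
  intro v
  have hι0 : ∀ u, 0 ≤ ι u := by
    intro u
    simp only [hι]
    exact Int.natCast_nonneg _
  by_cases hv : v = q
  · have hιv : ι v = 0 := by
      simp only [hι]
      rw [hv, hL]
      simp
    have hempty : (Finset.univ.filter (fun u => G.Adj u v ∧ ι u < ι v)) = ∅ := by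
      refine Finset.filter_false_of_mem fun u _ => ?_
      rw [hιv]
      simp only [not_and, not_lt]
      intro _
      exact hι0 u
    rw [nu, hempty]
    have := hD₂q
    rw [← hv] at this
    simpa using by omega
  · have hvl : v ∈ l := (hmem v).mpr (Finset.mem_erase.mpr ⟨hv, Finset.mem_univ v⟩)
    obtain ⟨i, hi, rfl⟩ := List.mem_iff_getElem.mp hvl
    have hιv : ι (l[i]'hi) = (i : ℤ) + 1 := by
      simp only [hι, hL]
      rw [List.idxOf_cons_ne _ (Ne.symm hv)]
      rw [List.Nodup.idxOf_getElem hnd i hi]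
      push_cast
      ring
    have hset : (Finset.univ.filter (fun u => G.Adj u (l[i]'hi) ∧ ι u < ι (l[i]'hi)))
        = (Finset.univ.filter (fun u => G.Adj (l[i]'hi) u ∧ (u ∉ Finset.univ.erase q ∨ u ∈ l.take i))) := by
      refine Finset.filter_congr fun u _ => ?_
      rw [hιv]
      have hlt : ι u < (i:ℤ) + 1 ↔ u ∈ L.take (i+1) := by
        rw [hι]
        have : ((L.idxOf u : ℤ) < (i:ℤ) + 1) ↔ (L.idxOf u < i + 1) := by
          constructor <;> intro <;> omega
        rw [this]
        exact indexOf_lt_iff_mem_take L u (hmemL u) (i+1)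
      have hnot : u ∉ Finset.univ.erase q ↔ u = q := by simp [Finset.mem_erase]
      have htake : u ∈ L.take (i+1) ↔ (u ∉ Finset.univ.erase q ∨ u ∈ l.take i) := by
        rw [hnot, hL, List.take_succ_cons, List.mem_cons]
      constructor
      · rintro ⟨h1, h2⟩
        exact ⟨h1.symm, htake.mp (hlt.mp h2)⟩
      · rintro ⟨h1, h2⟩
        exact ⟨h1.symm, hlt.mpr (htake.mpr h2)⟩
    rw [nu, hset]
    have := hprop i hi
    omega


def rset (D : V → ℤ) : Set ℕ :=
  { n : ℕ | ∃ E : V → ℤ, EffectiveDiv E ∧ degDiv E = (n : ℤ) ∧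
      ¬ ∃ E' : V → ℤ, EffectiveDiv E' ∧ LinEquiv G (fun v => D v - E v) E' }

lemma divisorRank_eq (D : V → ℤ) : divisorRank G D = ((sInf (rset G D) : ℕ) : ℤ) - 1 := rfl

lemma rset_nonempty [Nonempty V] (D : V → ℤ) : (rset G D).Nonempty := by
  classical
  set c : ℤ := ((degDiv D).natAbs : ℤ) + 1 with hc
  have hc1 : 1 ≤ c := by rw [hc]; have : (0:ℤ) ≤ ((degDiv D).natAbs : ℤ) := Int.natCast_nonneg _; omega
  set E : V → ℤ := fun _ => c with hE
  have hdegE : degDiv E = (Fintype.card V : ℤ) * c := by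
    rw [degDiv]
    simp [hE, Finset.sum_const, Finset.card_univ, mul_comm]
  have hn0 : 0 ≤ degDiv E := by
    rw [hdegE]
    have h5 : (0:ℤ) ≤ (Fintype.card V : ℤ) := Int.natCast_nonneg _
    nlinarith
  refine ⟨(degDiv E).toNat, E, fun v => by show (0:ℤ) ≤ c; omega, by rw [Int.toNat_of_nonneg hn0], ?_⟩
  rintro ⟨E', hE', heq⟩
  have h1 : degDiv (fun v => D v - E v) = degDiv E' := degDiv_eq_of_linEquiv G heq
  have h2 : 0 ≤ degDiv E' := Finset.sum_nonneg fun v _ => hE' v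
  have h3 : degDiv (fun v => D v - E v) = degDiv D - degDiv E := by
    rw [degDiv, degDiv, degDiv, ← Finset.sum_sub_distrib]
  have h4 : degDiv D ≤ ((degDiv D).natAbs : ℤ) := Int.le_natAbs
  have h5 : (1:ℤ) ≤ (Fintype.card V : ℤ) := by exact_mod_cast Fintype.card_pos
  rw [hdegE] at h3
  nlinarith
 
lemma key_ineq (hG : G.Connected) (D : V → ℤ) :
    ((sInf (rset G (fun v => canonicalDiv G v - D v)) : ℕ) : ℤ)
      ≤ ((sInf (rset G D) : ℕ) : ℤ) - degDiv D
        + (G.edgeFinset.card : ℤ) - (Fintype.card V : ℤ) := by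
  classical
  have hne : Nonempty V := hG.nonempty
  obtain ⟨E, hEeff, hEdeg, hEnot⟩ := Nat.sInf_mem (rset_nonempty G D)
  set k : ℕ := sInf (rset G D) with hk
  obtain ⟨ι, hι, D₂, hlin2, hdom⟩ := exists_nu_dominator G hG (fun v => D v - E v) hEnot
  set ν : V → ℤ := nu G ι with hν
  set D' : V → ℤ := fun v => D₂ v + E v with hD'
  have hlinDD' : LinEquiv G D D' := by
    have h1 := linEquiv_add_right G E hlin2
    have h2 : (fun v => D v - E v + E v) = D := funext fun v => by ring
    rw [h2] at h1
    exact h1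
  set E₂ : V → ℤ := fun v => max (ν v - D' v) 0 with hE₂
  have hE₂eff : EffectiveDiv E₂ := fun v => le_max_right _ _
  have hE₂0 : 0 ≤ degDiv E₂ := Finset.sum_nonneg fun v _ => hE₂eff v
  have hmem : (degDiv E₂).toNat ∈ rset G (fun v => canonicalDiv G v - D v) := by
    refine ⟨E₂, hE₂eff, by rw [Int.toNat_of_nonneg hE₂0], ?_⟩
    rintro ⟨E₃, hE₃, hlin3⟩
    -- derive: nu (-ι) is equivalent to an effective divisor
    have hstep1 : LinEquiv G (fun v => (canonicalDiv G v - D v) - E₂ v)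
        (fun v => (canonicalDiv G v - D' v) - E₂ v) :=
      linEquiv_sub_right G E₂ (linEquiv_sub_left G (fun v => canonicalDiv G v) hlinDD')
    have hstep2 : LinEquiv G (fun v => (canonicalDiv G v - D' v) - E₂ v) E₃ :=
      linEquiv_trans G (linEquiv_symm G hstep1) hlin3
    set Y : V → ℤ := fun v => (canonicalDiv G v - ν v) - ((canonicalDiv G v - D' v) - E₂ v) with hY
    have hYeff : ∀ v, 0 ≤ Y v := by
      intro v
      simp only [hY, hE₂]
      have := le_max_left (ν v - D' v) 0
      omega
    have hstep3 := linEquiv_add_right G Y hstep2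
    have hfix : (fun v => (canonicalDiv G v - D' v - E₂ v) + Y v)
        = nu G (fun u => -ι u) := by
      funext v
      rw [nu_neg G ι hι v, hY]
      simp only
      ring
    rw [hfix] at hstep3
    have hinj2 : Function.Injective (fun u => -ι u) := fun a b hab => hι (by
      simp only at hab
      omega)
    exact nu_not_equiv_effective G _ hinj2 _
      (fun v => by
        have h1 := hE₃ v
        have h2 := hYeff v
        show (0:ℤ) ≤ E₃ v + Y v
        omega) hstep3
  have hle : ((sInf (rset G (fun v => canonicalDiv G v - D v)) : ℕ) : ℤ) ≤ (degDiv E₂).toNat := by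
    exact_mod_cast Nat.sInf_le hmem
  have heq1 : ((degDiv E₂).toNat : ℤ) = degDiv E₂ := Int.toNat_of_nonneg hE₂0
  have hstep4 : degDiv E₂ ≤ ∑ v, max (ν v - D₂ v) 0 := by
    rw [degDiv]
    refine Finset.sum_le_sum fun v _ => ?_
    simp only [hE₂, hD']
    have := hEeff v
    omega
  have hstep5 : ∑ v, max (ν v - D₂ v) 0 = degDiv ν - degDiv D₂ := by
    rw [degDiv, degDiv, ← Finset.sum_sub_distrib]
    refine Finset.sum_congr rfl fun v _ => ?_
    have := hdom v
    omega
  have hdegν : degDiv ν = (G.edgeFinset.card : ℤ) - (Fintype.card V : ℤ) := degDiv_nu G ι hι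
  have hdegD₂ : degDiv D₂ = degDiv D - (k : ℤ) := by
    have h1 := degDiv_eq_of_linEquiv G hlin2
    have h2 : degDiv (fun v => D v - E v) = degDiv D - degDiv E := by
      rw [degDiv, degDiv, degDiv, ← Finset.sum_sub_distrib]
    rw [← h1, h2, hEdeg]
  omega


end BNRR

/-- Riemann–Roch for graphs, Baker–Norine:
`r(D) - r(K - D) = deg(D) - g + 1`. -/
theorem stmt18 {V : Type*} [Fintype V] [DecidableEq V] (G : SimpleGraph V)
    [DecidableRel G.Adj] (hG : G.Connected)
    (D : V → ℤ) :
    divisorRank G D - divisorRank G (fun v => canonicalDiv G v - D v) =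
      degDiv D - graphGenus G + 1 := by
  classical
  have hne : Nonempty V := hG.nonempty
  have h1 := BNRR.key_ineq G hG D
  have h2 := BNRR.key_ineq G hG (fun v => canonicalDiv G v - D v)
  have hDD : (fun v => canonicalDiv G v - (canonicalDiv G v - D v)) = D :=
    funext fun v => by ring
  rw [hDD] at h2
  have hdegK : degDiv (fun v => canonicalDiv G v - D v)
      = 2 * (G.edgeFinset.card : ℤ) - 2 * (Fintype.card V : ℤ) - degDiv D := by
    have hsum : (∑ v, (G.degree v : ℤ)) = 2 * (G.edgeFinset.card : ℤ) := by
      have := G.sum_degrees_eq_twice_card_edges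
      exact_mod_cast congrArg (Nat.cast : ℕ → ℤ) this
    rw [degDiv, degDiv]
    unfold canonicalDiv
    rw [Finset.sum_sub_distrib, Finset.sum_sub_distrib, hsum]
    simp [Finset.sum_const, Finset.card_univ]
    ring
  rw [hdegK] at h2
  rw [BNRR.divisorRank_eq, BNRR.divisorRank_eq, graphGenus]
  have e1 : BNRR.rset G D = { n : ℕ | ∃ E : V → ℤ, EffectiveDiv E ∧ degDiv E = (n : ℤ) ∧
      ¬ ∃ E' : V → ℤ, EffectiveDiv E' ∧ LinEquiv G (fun v => D v - E v) E' } := rfl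
  omega
end

section
/- A divisor D on a finite connected simple graph G is partially orientable (i.e., D = D_O for some partial orientation O of G) if and only if D(v) ≥ −1 for every vertex v and χ̄(G, D) ≥ 0 (that is, χ̄(S, D) ≥ 0 for every non-empty S ⊆ V). -/
section AuxStmt19
open Finset
variable {V : Type*} [Fintype V] [DecidableEq V] (G : SimpleGraph V) [DecidableRel G.Adj]

/-- Edges meeting `S` are exactly the edges not inside `Sᶜ`. -/
lemma meet_eq_biUnion (S : Finset V) :
    S.biUnion (fun v => G.incidenceFinset v)
      = G.edgeFinset.filter (fun e => ¬ e ∈ (Sᶜ : Finset V).sym2) := by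
  ext e
  induction e with
  | _ a b =>
    simp only [Finset.mem_biUnion, SimpleGraph.mem_incidenceFinset,
      SimpleGraph.incidenceSet, Set.mem_setOf_eq, Set.mem_sep_iff,
      Finset.mem_filter, Finset.mk_mem_sym2_iff, Finset.mem_compl,
      SimpleGraph.mem_edgeFinset]
    constructor
    · rintro ⟨v, hv, he, hve⟩
      rw [Sym2.mem_iff] at hve
      refine ⟨he, ?_⟩
      rcases hve with h | h <;> subst h <;> tauto
    · rintro ⟨he, h⟩
      by_cases ha : a ∈ S
      · exact ⟨a, ha, he, Sym2.mem_mk_left a b⟩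
      · have hb : b ∈ S := by tauto
        exact ⟨b, hb, he, Sym2.mem_mk_right a b⟩

lemma meet_card (S : Finset V) :
    ((S.biUnion (fun v => G.incidenceFinset v)).card : ℤ)
      = (G.edgeFinset.card : ℤ) - (inducedEdgeCount G Sᶜ : ℤ) := by
  rw [meet_eq_biUnion]
  have h := Finset.card_filter_add_card_filter_not
    (s := G.edgeFinset) (p := fun e => e ∈ (Sᶜ : Finset V).sym2)
  unfold inducedEdgeCount
  -- push_cast
  omega

end AuxStmt19

/-- A divisor `D` is partially orientable iff `D(v) ≥ -1` for every
vertex `v` and `χ̄(S, D) ≥ 0` for every nonempty `S ⊆ V`. -/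
theorem stmt19 {V : Type*} [Fintype V] [DecidableEq V] (G : SimpleGraph V)
    [DecidableRel G.Adj] (hG : G.Connected)
    (D : V → ℤ) :
    (∃ O : PartialOrientation G, D = O.div) ↔
      ((∀ v, -1 ≤ D v) ∧ ∀ S : Finset V, S.Nonempty → 0 ≤ chiBar G D S) := by
  classical
  constructor
  · -- forward direction
    rintro ⟨O, rfl⟩
    refine ⟨fun v => by simp [PartialOrientation.div]; omega, ?_⟩
    intro S _
    -- the multiset of (head, tail) pairs with head in S
    set T : Finset ((_ : V) × V) :=
      S.sigma (fun v => Finset.univ.filter (fun u => O.dir u v = true)) with hT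
    have hcardT : T.card = ∑ v ∈ S, O.indeg v := by
      rw [hT, Finset.card_sigma]; rfl
    have hmaps : ∀ p ∈ T, (fun p : (_ : V) × V => s(p.2, p.1)) p ∈
        G.edgeFinset.filter (fun e => ¬ e ∈ (Sᶜ : Finset V).sym2) := by
      rintro ⟨v, u⟩ hp
      rw [hT, Finset.mem_sigma] at hp
      obtain ⟨hvS, hu⟩ := hp
      rw [Finset.mem_filter] at hu
      have hadj : G.Adj u v := O.adj_of_dir u v hu.2
      simp only [Finset.mem_filter, SimpleGraph.mem_edgeFinset, Finset.mk_mem_sym2_iff,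
        Finset.mem_compl, SimpleGraph.mem_edgeSet]
      exact ⟨hadj, fun h => h.2 hvS⟩
    have hdir : ∀ p : (_ : V) × V, p ∈ T → O.dir p.2 p.1 = true := by
      rintro ⟨v, u⟩ hp
      rw [hT, Finset.mem_sigma, Finset.mem_filter] at hp
      exact hp.2.2
    have hinj : Set.InjOn (fun p : (_ : V) × V => s(p.2, p.1)) T := by
      rintro ⟨v, u⟩ hp ⟨v', u'⟩ hq h
      simp only [Sym2.eq, Sym2.rel_iff', Prod.mk.injEq, Prod.swap_prod_mk] at h
      rcases h with ⟨h1, h2⟩ | ⟨h1, h2⟩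
      · subst h1; subst h2; rfl
      · exfalso
        have hd1 := hdir _ hp
        have hd2 := hdir _ hq
        simp only [← h1, ← h2] at hd2
        have := O.not_both u v hd1
        rw [this] at hd2
        exact Bool.false_ne_true hd2
    have hle := Finset.card_le_card_of_injOn _ hmaps hinj
    rw [hcardT] at hle
    have hmc := meet_card G S
    rw [meet_eq_biUnion] at hmc
    have key : ((∑ v ∈ S, O.indeg v : ℕ) : ℤ)
        ≤ (G.edgeFinset.card : ℤ) - (inducedEdgeCount G Sᶜ : ℤ) := by
      rw [← hmc]; exact_mod_cast hle
    have hsum : ∑ v ∈ S, O.div v = ((∑ v ∈ S, O.indeg v : ℕ) : ℤ) - (S.card : ℤ) := by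
      unfold PartialOrientation.div
      push_cast
      rw [Finset.sum_sub_distrib]
      simp
    unfold chiBar
    rw [hsum]
    linarith
  · -- backward direction
    rintro ⟨h1, h2⟩
    set d : V → ℕ := fun v => (D v + 1).toNat with hd
    have hdv : ∀ v, (d v : ℤ) = D v + 1 := fun v => Int.toNat_of_nonneg (by linarith [h1 v])
    set t : (Σ v : V, Fin (d v)) → Finset (Sym2 V) := fun x => G.incidenceFinset x.1 with ht
    have hall : ∀ A : Finset (Σ v : V, Fin (d v)), A.card ≤ (A.biUnion t).card := by
      intro A
      rcases A.eq_empty_or_nonempty with rfl | hA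
      · simp
      set S : Finset V := A.image Sigma.fst with hS
      have hSne : S.Nonempty := hA.image _
      have hsub : A ⊆ S.sigma (fun v => (Finset.univ : Finset (Fin (d v)))) := by
        intro x hx
        rw [Finset.mem_sigma]
        exact ⟨Finset.mem_image_of_mem _ hx, Finset.mem_univ _⟩
      have hA1 : A.card ≤ ∑ v ∈ S, d v := by
        calc A.card ≤ (S.sigma (fun v => (Finset.univ : Finset (Fin (d v))))).card :=
              Finset.card_le_card hsub
          _ = ∑ v ∈ S, d v := by rw [Finset.card_sigma]; simp
      have hbiU : A.biUnion t = S.biUnion (fun v => G.incidenceFinset v) := by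
        rw [hS, Finset.image_biUnion]
      have hchi := h2 S hSne
      unfold chiBar at hchi
      have h3 : ((∑ v ∈ S, d v : ℕ) : ℤ) ≤ (((A.biUnion t).card : ℕ) : ℤ) := by
        rw [hbiU, meet_card G S]
        push_cast
        calc (∑ v ∈ S, (d v : ℤ)) = ∑ v ∈ S, (D v + 1) := by
              exact Finset.sum_congr rfl (fun v _ => hdv v)
          _ = (∑ v ∈ S, D v) + S.card := by rw [Finset.sum_add_distrib]; simp
          _ ≤ (G.edgeFinset.card : ℤ) - (inducedEdgeCount G Sᶜ : ℤ) := by linarith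
      calc (A.card : ℕ) ≤ ∑ v ∈ S, d v := hA1
        _ ≤ (A.biUnion t).card := by exact_mod_cast h3
    obtain ⟨f, hfinj, hf⟩ := (Finset.all_card_le_biUnion_card_iff_exists_injective t).mp hall
    have hfe : ∀ x : Σ v : V, Fin (d v), f x ∈ G.edgeSet ∧ x.1 ∈ f x := by
      intro x
      have := hf x
      rw [ht, SimpleGraph.mem_incidenceFinset] at this
      exact this
    -- define the partial orientation
    set dirf : V → V → Bool :=
      fun u v => decide (G.Adj u v ∧ ∃ i : Fin (d v), f ⟨v, i⟩ = s(u, v)) with hdirf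
    have hdirf_iff : ∀ u v, dirf u v = true ↔
        (G.Adj u v ∧ ∃ i : Fin (d v), f ⟨v, i⟩ = s(u, v)) := by
      intro u v; rw [hdirf]; exact decide_eq_true_iff
    have hnb : ∀ u v, dirf u v = true → dirf v u = false := by
      intro u v h
      obtain ⟨hadj, i, hi⟩ := (hdirf_iff u v).mp h
      rw [← Bool.not_eq_true, hdirf_iff]
      rintro ⟨hadj', j, hj⟩
      have heq : f ⟨u, j⟩ = f ⟨v, i⟩ := by rw [hi, hj, Sym2.eq_swap]
      have := hfinj heq
      have : u = v := congrArg Sigma.fst this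
      exact hadj.ne this
    refine ⟨⟨dirf, fun u v h => ((hdirf_iff u v).mp h).1, hnb⟩, ?_⟩
    funext v
    show D v = (PartialOrientation.mk dirf _ _).div v
    have hvmem : ∀ i : Fin (d v), v ∈ f ⟨v, i⟩ := fun i => (hfe ⟨v, i⟩).2
    set g : Fin (d v) → V := fun i => Sym2.Mem.other' (hvmem i) with hg
    have hgspec : ∀ i, s(v, g i) = f ⟨v, i⟩ := fun i => Sym2.other_spec' (hvmem i)
    have hginj : Function.Injective g := by
      intro i j hij
      have h1' : f ⟨v, i⟩ = f ⟨v, j⟩ := by rw [← hgspec i, ← hgspec j, hij]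
      have := hfinj h1'
      simpa using this
    have himg : Finset.univ.image g = Finset.univ.filter (fun u => dirf u v = true) := by
      ext u
      simp only [Finset.mem_image, Finset.mem_univ, true_and, Finset.mem_filter]
      constructor
      · rintro ⟨i, rfl⟩
        rw [hdirf_iff]
        have hedge : s(v, g i) ∈ G.edgeSet := by rw [hgspec i]; exact (hfe ⟨v, i⟩).1
        rw [SimpleGraph.mem_edgeSet] at hedge
        exact ⟨hedge.symm, i, by rw [← hgspec i, Sym2.eq_swap]⟩
      · intro h
        obtain ⟨hadj, i, hi⟩ := (hdirf_iff u v).mp h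
        refine ⟨i, ?_⟩
        have : s(v, g i) = s(v, u) := by rw [hgspec i, hi, Sym2.eq_swap]
        exact Sym2.congr_right.mp this
    have hindeg : (PartialOrientation.mk dirf (fun u v h => ((hdirf_iff u v).mp h).1)
        hnb : PartialOrientation G).indeg v = d v := by
      unfold PartialOrientation.indeg
      rw [← himg, Finset.card_image_of_injective _ hginj]
      simp
    unfold PartialOrientation.div
    rw [hindeg, hdv v]
    ring
end
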